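/- arXiv:2107.11925 — 8 statements merged into one kernel-verified Lean document; each statement's English description precedes it below -/
import Mathlib

section
/- Let λ ∈ ℝ \ {0} and let f : Ω → ℝ be a regular c_λ-convex function on a nonempty open convex set Ω ⊂ ℝ^d. Then for every u ∈ Ω, setting v = ∇^{c_λ} f(u) = ∇f(u)/(1 − λ ∇f(u)·u), one has 1 + λ u·v > 0 and the Fenchel-type identity f(u) + f^{c_λ}(v) = (1/λ)·log(1 + λ u·v), where f^{c_λ}(v) = sup_{u' ∈ Ω} { (1/λ)·log(1 + λ u'·v) − f(u') }. -/
open MeasureTheory Real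
open scoped RealInnerProductSpace ENNReal BigOperators

noncomputable section

/-- The negative logarithmic cost `-c_λ(u,v) = (1/λ)·log(1 + λ u·v)`, valued in `EReal`,
with the convention `log t = -∞` for `t ≤ 0` (so that `(1/λ)·(-∞) = -∞` for `λ > 0` and
`= +∞` for `λ < 0`). -/
def negCost {d : ℕ} (lam : ℝ) (u v : EuclideanSpace ℝ (Fin d)) : EReal :=
  if 0 < 1 + lam * ⟪u, v⟫ then (((1 / lam) * Real.log (1 + lam * ⟪u, v⟫) : ℝ) : EReal)
  else if 0 < lam then ⊥ else ⊤

/-- The `c_λ`-conjugate `f^{c_λ}(v) = sup_{u ∈ Ω} { (1/λ)·log(1 + λ u·v) − f(u) }`. -/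
def lamConj {d : ℕ} (lam : ℝ) (Ω : Set (EuclideanSpace ℝ (Fin d)))
    (f : EuclideanSpace ℝ (Fin d) → ℝ) (v : EuclideanSpace ℝ (Fin d)) : EReal :=
  ⨆ u ∈ Ω, (negCost lam u v - ((f u : ℝ) : EReal))

/-- The `λ`-gradient (deformed Legendre transform) `∇^{c_λ} f(u) = ∇f(u)/(1 − λ ∇f(u)·u)`. -/
def lamGrad {d : ℕ} (lam : ℝ) (f : EuclideanSpace ℝ (Fin d) → ℝ)
    (u : EuclideanSpace ℝ (Fin d)) : EuclideanSpace ℝ (Fin d) :=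
  (1 - lam * ⟪gradient f u, u⟫)⁻¹ • gradient f u

/-- A regular `c_λ`-convex function: `f` smooth on a nonempty open convex `Ω`, the Hessian of
`F_λ = (1/λ)(e^{λ f} − 1)` strictly positive definite on `Ω`, and `1 − λ ∇f(u)·u > 0` on `Ω`. -/
def IsRegularCConvex {d : ℕ} (lam : ℝ) (Ω : Set (EuclideanSpace ℝ (Fin d)))
    (f : EuclideanSpace ℝ (Fin d) → ℝ) : Prop :=
  Ω.Nonempty ∧ IsOpen Ω ∧ Convex ℝ Ω ∧ ContDiffOn ℝ (⊤ : ℕ∞) f Ω ∧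
    (∀ u ∈ Ω, ∀ w : EuclideanSpace ℝ (Fin d), w ≠ 0 →
      0 < ⟪fderiv ℝ (gradient fun z => (1 / lam) * (Real.exp (lam * f z) - 1)) u w, w⟫) ∧
    ∀ u ∈ Ω, 0 < 1 - lam * ⟪gradient f u, u⟫

/-!
The Hessian condition makes `F_λ = (1/λ)(e^{λ f} - 1)` convex on `Ω`, so `F_λ` lies above its
tangent plane at `u`. Since `∇F_λ = e^{λ f} ∇f`, this reads
`⟪∇f(u), u' - u⟫ ≤ (1/λ)(e^{λ (f(u') - f(u))} - 1)`, and inverting the increasing map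
`x ↦ (1/λ)(e^{λ x} - 1)` gives `(1/λ) log(1 + λ ⟪∇f(u), u' - u⟫) ≤ f(u') - f(u)` whenever the
logarithm is finite (when it is not, `λ > 0` and the cost is `-∞`). Because
`1 + λ ⟪u', v⟫ = (1 + λ ⟪∇f(u), u' - u⟫) / (1 - λ ⟪∇f(u), u⟫)` for `v = ∇^{c_λ} f(u)`, this says
exactly that the supremum defining `f^{c_λ}(v)` is attained at `u' = u`.
-/

theorem add_deriv_mul_le_of_deriv2_nonneg {φ φ' φ'' : ℝ → ℝ} {a b : ℝ} (hab : a < b)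
    (hφ : ∀ t ∈ Set.Icc a b, HasDerivAt φ (φ' t) t)
    (hφ' : ∀ t ∈ Set.Icc a b, HasDerivAt φ' (φ'' t) t)
    (hφ'' : ∀ t ∈ Set.Icc a b, 0 ≤ φ'' t) :
    φ a + φ' a * (b - a) ≤ φ b := by
  have hint : interior (Set.Icc a b) ⊆ Set.Icc a b := interior_subset
  have hconv : ConvexOn ℝ (Set.Icc a b) φ :=
    convexOn_of_hasDerivWithinAt2_nonneg (convex_Icc a b)
      (fun t ht => (hφ t ht).continuousAt.continuousWithinAt)
      (fun t ht => (hφ t (hint ht)).hasDerivWithinAt)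
      (fun t ht => (hφ' t (hint ht)).hasDerivWithinAt)
      (fun t ht => hφ'' t (hint ht))
  have ha : a ∈ Set.Icc a b := Set.left_mem_Icc.mpr hab.le
  have hb : b ∈ Set.Icc a b := Set.right_mem_Icc.mpr hab.le
  have hslope := hconv.le_slope_of_hasDerivAt ha hb hab (hφ a ha)
  rw [slope_def_field, le_div_iff₀ (sub_pos.mpr hab)] at hslope
  linarith

section Gradient

variable {E : Type*} [NormedAddCommGroup E] [InnerProductSpace ℝ E] [CompleteSpace E]

theorem ContDiffAt.differentiableAt_gradient {F : E → ℝ} {z : E} (hF : ContDiffAt ℝ 2 F z) :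
    DifferentiableAt ℝ (gradient F) z :=
  (InnerProductSpace.toDual ℝ E).symm.differentiableAt.comp z
    ((hF.fderiv_right (m := 1) le_rfl).differentiableAt one_ne_zero)

theorem add_inner_gradient_le_of_hessian_nonneg {Ω : Set E} (hΩ : Convex ℝ Ω) {F : E → ℝ}
    (hF : ∀ z ∈ Ω, DifferentiableAt ℝ F z)
    (hgradF : ∀ z ∈ Ω, DifferentiableAt ℝ (gradient F) z)
    (hHess : ∀ z ∈ Ω, ∀ w : E, 0 ≤ ⟪fderiv ℝ (gradient F) z w, w⟫)
    {u u' : E} (hu : u ∈ Ω) (hu' : u' ∈ Ω) :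
    F u + ⟪gradient F u, u' - u⟫ ≤ F u' := by
  set w := u' - u
  set γ : ℝ → E := fun t => u + t • w
  have hγΩ : ∀ t ∈ Set.Icc (0 : ℝ) 1, γ t ∈ Ω := fun t ht => hΩ.add_smul_sub_mem hu hu' ht
  have hγ : ∀ t : ℝ, HasDerivAt γ w t := fun t =>
    (((hasDerivAt_id t).smul_const w).const_add u).congr_deriv (one_smul ℝ w)
  have hφ : ∀ t ∈ Set.Icc (0 : ℝ) 1,
      HasDerivAt (fun s => F (γ s)) ⟪gradient F (γ t), w⟫ t := fun t ht => by
    rw [inner_gradient_left]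
    exact (hF _ (hγΩ t ht)).hasFDerivAt.comp_hasDerivAt t (hγ t)
  have hφ' : ∀ t ∈ Set.Icc (0 : ℝ) 1,
      HasDerivAt (fun s => ⟪gradient F (γ s), w⟫) ⟪fderiv ℝ (gradient F) (γ t) w, w⟫ t :=
    fun t ht => by
      simpa using ((hgradF _ (hγΩ t ht)).hasFDerivAt.comp_hasDerivAt t (hγ t)).inner ℝ
        (hasDerivAt_const t w)
  simpa [γ, w] using add_deriv_mul_le_of_deriv2_nonneg zero_lt_one hφ hφ'
    (fun t ht => hHess _ (hγΩ t ht) w)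

theorem gradient_one_div_mul_exp_mul_sub_one {lam : ℝ} (hlam : lam ≠ 0) {f : E → ℝ} {u : E}
    (hf : DifferentiableAt ℝ f u) :
    gradient (fun z => (1 / lam) * (Real.exp (lam * f z) - 1)) u
      = Real.exp (lam * f u) • gradient f u := by
  apply HasGradientAt.gradient
  rw [hasGradientAt_iff_hasFDerivAt, map_smul, toDual_gradient]
  refine ((((hf.hasFDerivAt.const_mul lam).exp).sub_const 1).const_mul (1 / lam)).congr_fderiv ?_
  rw [smul_smul, smul_smul]
  congr 1
  field_simp

end Gradient

section LogExp

variable {lam x y : ℝ}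

theorem one_div_mul_log_le_of_le_expm1 (hlam : lam ≠ 0)
    (hy : y ≤ 1 / lam * (Real.exp (lam * x) - 1)) (hpos : 0 < 1 + lam * y) :
    1 / lam * Real.log (1 + lam * y) ≤ x := by
  rw [one_div_mul_eq_div] at hy ⊢
  rcases hlam.lt_or_gt with hneg | hpos'
  · rw [le_div_iff_of_neg hneg] at hy
    rw [div_le_iff_of_neg hneg, Real.le_log_iff_exp_le hpos, mul_comm x]
    linarith
  · rw [le_div_iff₀ hpos'] at hy
    rw [div_le_iff₀ hpos', Real.log_le_iff_le_exp hpos, mul_comm x]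
    linarith

theorem one_add_mul_pos_of_le_expm1 (hlam : lam < 0)
    (hy : y ≤ 1 / lam * (Real.exp (lam * x) - 1)) : 0 < 1 + lam * y := by
  rw [one_div_mul_eq_div, le_div_iff_of_neg hlam] at hy
  linarith [Real.exp_pos (lam * x)]

end LogExp

section LogCost

variable {d : ℕ} {lam : ℝ} {Ω : Set (EuclideanSpace ℝ (Fin d))}
  {f : EuclideanSpace ℝ (Fin d) → ℝ} {u u' v : EuclideanSpace ℝ (Fin d)}

theorem negCost_of_pos (h : 0 < 1 + lam * ⟪u, v⟫) :
    negCost lam u v = (((1 / lam) * Real.log (1 + lam * ⟪u, v⟫) : ℝ) : EReal) :=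
  if_pos h

theorem negCost_of_nonpos (hlam : 0 < lam) (h : 1 + lam * ⟪u, v⟫ ≤ 0) : negCost lam u v = ⊥ := by
  rw [negCost, if_neg h.not_gt, if_pos hlam]

theorem add_lamConj_eq_of_forall_le (hu : u ∈ Ω) {r : ℝ} (hr : negCost lam u v = r)
    (hmax : ∀ u' ∈ Ω, negCost lam u' v - f u' ≤ negCost lam u v - f u) :
    (f u : EReal) + lamConj lam Ω f v = r := by
  have hconj : lamConj lam Ω f v = negCost lam u v - f u :=
    le_antisymm (iSup₂_le hmax) (le_iSup₂ (f := fun u' _ => negCost lam u' v - (f u' : EReal)) u hu)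
  rw [hconj, hr, ← EReal.coe_sub, ← EReal.coe_add, add_sub_cancel]

theorem one_add_mul_inner_lamGrad (hc : 1 - lam * ⟪gradient f u, u⟫ ≠ 0) :
    1 + lam * ⟪u', lamGrad lam f u⟫
      = (1 + lam * ⟪gradient f u, u' - u⟫) / (1 - lam * ⟪gradient f u, u⟫) := by
  rw [lamGrad, real_inner_smul_right, real_inner_comm (gradient f u) u', inner_sub_right]
  field_simp
  ring

theorem one_add_mul_inner_self_lamGrad (hc : 1 - lam * ⟪gradient f u, u⟫ ≠ 0) :
    1 + lam * ⟪u, lamGrad lam f u⟫ = (1 - lam * ⟪gradient f u, u⟫)⁻¹ := by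
  rw [one_add_mul_inner_lamGrad hc, sub_self, inner_zero_right, mul_zero, add_zero, one_div]

theorem IsRegularCConvex.one_sub_mul_inner_gradient_pos (hreg : IsRegularCConvex lam Ω f)
    (hu : u ∈ Ω) : 0 < 1 - lam * ⟪gradient f u, u⟫ :=
  hreg.2.2.2.2.2 u hu

/-- The tangent-plane inequality for the convex function `F_λ = (1/λ)(e^{λ f} - 1)`,
rewritten in terms of `f`. -/
theorem IsRegularCConvex.inner_gradient_sub_le (hlam : lam ≠ 0) (hreg : IsRegularCConvex lam Ω f)
    (hu : u ∈ Ω) (hu' : u' ∈ Ω) :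
    ⟪gradient f u, u' - u⟫ ≤ 1 / lam * (Real.exp (lam * (f u' - f u)) - 1) := by
  obtain ⟨-, hΩo, hΩc, hf, hHess, -⟩ := hreg
  have hf2 : ∀ z ∈ Ω, ContDiffAt ℝ 2 f z := fun z hz =>
    (hf.contDiffAt (hΩo.mem_nhds hz)).of_le ENat.LEInfty.out
  have hF2 : ∀ z ∈ Ω, ContDiffAt ℝ 2 (fun z => (1 / lam) * (Real.exp (lam * f z) - 1)) z :=
    fun z hz => contDiffAt_const.mul (((contDiffAt_const.mul (hf2 z hz)).exp).sub contDiffAt_const)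
  have htangent := add_inner_gradient_le_of_hessian_nonneg hΩc
    (fun z hz => (hF2 z hz).differentiableAt two_ne_zero)
    (fun z hz => (hF2 z hz).differentiableAt_gradient)
    (fun z hz w => by
      rcases eq_or_ne w 0 with rfl | hw
      · simp
      · exact (hHess z hz w hw).le)
    hu hu'
  rw [gradient_one_div_mul_exp_mul_sub_one hlam ((hf2 u hu).differentiableAt two_ne_zero),
    real_inner_smul_left] at htangent
  have hexp : Real.exp (lam * f u) * (1 / lam * (Real.exp (lam * (f u' - f u)) - 1))
      = 1 / lam * (Real.exp (lam * f u') - 1) - 1 / lam * (Real.exp (lam * f u) - 1) := by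
    rw [mul_sub lam, Real.exp_sub]
    field_simp
    ring
  refine le_of_mul_le_mul_left ?_ (Real.exp_pos (lam * f u))
  rw [hexp]
  linarith

theorem IsRegularCConvex.negCost_lamGrad_sub_le (hlam : lam ≠ 0) (hreg : IsRegularCConvex lam Ω f)
    (hu : u ∈ Ω) (hu' : u' ∈ Ω) :
    negCost lam u' (lamGrad lam f u) - f u' ≤ negCost lam u (lamGrad lam f u) - f u := by
  have hgrad := hreg.inner_gradient_sub_le hlam hu hu'
  have hc := hreg.one_sub_mul_inner_gradient_pos hu
  have hself := one_add_mul_inner_self_lamGrad (f := f) hc.ne'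
  have hu'v := one_add_mul_inner_lamGrad (f := f) (u' := u') hc.ne'
  rw [negCost_of_pos (u := u) (by rw [hself]; exact inv_pos.mpr hc)]
  rcases lt_or_ge 0 (1 + lam * ⟪gradient f u, u' - u⟫) with hA | hA
  · rw [negCost_of_pos (u := u') (by rw [hu'v]; exact div_pos hA hc), ← EReal.coe_sub,
      ← EReal.coe_sub, EReal.coe_le_coe_iff, hu'v, hself, Real.log_div hA.ne' hc.ne',
      Real.log_inv, mul_sub]
    linarith [one_div_mul_log_le_of_le_expm1 hlam hgrad hA]
  · have hlam_pos : 0 < lam := hlam.lt_or_gt.resolve_left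
      fun hneg => hA.not_gt (one_add_mul_pos_of_le_expm1 hneg hgrad)
    rw [negCost_of_nonpos (u := u') hlam_pos
      (by rw [hu'v]; exact div_nonpos_of_nonpos_of_nonneg hA hc.le), EReal.bot_sub]
    exact bot_le

end LogCost

/-- For a regular `c_λ`-convex function `f` on `Ω` and `u ∈ Ω`, setting
`v = ∇^{c_λ} f(u)`, one has `1 + λ u·v > 0` and the Fenchel-type identity
`f(u) + f^{c_λ}(v) = (1/λ)·log(1 + λ u·v)`. -/
theorem lambda_duality_fenchel_identity {d : ℕ} (lam : ℝ) (hlam : lam ≠ 0)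
    (Ω : Set (EuclideanSpace ℝ (Fin d))) (f : EuclideanSpace ℝ (Fin d) → ℝ)
    (hreg : IsRegularCConvex lam Ω f)
    (u : EuclideanSpace ℝ (Fin d)) (hu : u ∈ Ω) :
    0 < 1 + lam * ⟪u, lamGrad lam f u⟫ ∧
      (f u : EReal) + lamConj lam Ω f (lamGrad lam f u)
        = (((1 / lam) * Real.log (1 + lam * ⟪u, lamGrad lam f u⟫) : ℝ) : EReal) := by
  have hc := hreg.one_sub_mul_inner_gradient_pos hu
  have hpos : 0 < 1 + lam * ⟪u, lamGrad lam f u⟫ := by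
    rw [one_add_mul_inner_self_lamGrad hc.ne']
    exact inv_pos.mpr hc
  exact ⟨hpos, add_lamConj_eq_of_forall_le hu (negCost_of_pos hpos)
    fun u' hu' => hreg.negCost_lamGrad_sub_le hlam hu hu'⟩
end
end

section
/- Let λ ∈ ℝ \ {0} and let f : Ω → ℝ be a regular c_λ-convex function on a nonempty open convex set Ω ⊂ ℝ^d. Then the λ-gradient map ∇^{c_λ} f : Ω → ℝ^d, u ↦ ∇f(u)/(1 − λ ∇f(u)·u), is injective, its range Ω' = ∇^{c_λ} f(Ω) is an open subset of ℝ^d, and ∇^{c_λ} f is a smooth diffeomorphism from Ω onto Ω' (its inverse is smooth). -/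
/-!
Put `F = F_λ`, so that `1 + λ F = e^{λ f}`, `∇F = e^{λ f} ∇f` and
`∇^{c_λ} f (u) = ∇F(u) / (1 + λ F(u) - λ ⟪∇F(u), u⟫)`. If `v = ∇^{c_λ} f (u)` then
`K_v(u) := (1 + λ F(u)) v - (1 + λ ⟪u, v⟫) ∇F(u)` vanishes. Along a line `u + t w` with `v` fixed,
`d/dt ⟪w, K_v⟫ = -(1 + λ ⟪u + t w, v⟫) ⟪D²F w, w⟫`, which is negative on the half-space
`1 + λ ⟪·, v⟫ > 0`; that half-space contains every preimage of `v`, so Rolle's theorem on the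
segment between two preimages gives injectivity. Differentiating `K_{∇^{c_λ} f (u)}(u) ≡ 0` the
same way shows that the differential of `∇^{c_λ} f` is injective, and the inverse function
theorem does the rest.
-/

open MeasureTheory Real
open scoped RealInnerProductSpace ENNReal BigOperators

noncomputable section

open scoped Topology

section InverseFunction

variable {𝕂 : Type*} [RCLike 𝕂] {E F : Type*} [NormedAddCommGroup E] [NormedSpace 𝕂 E]
  [CompleteSpace E] [NormedAddCommGroup F] [NormedSpace 𝕂 F] {n : WithTop ℕ∞}
  {T : E → F} {Ω : Set E}

theorem isOpen_image_of_hasStrictFDerivAt_equiv (hΩ : IsOpen Ω)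
    (hT : ∀ u ∈ Ω, ∃ e : E ≃L[𝕂] F, HasStrictFDerivAt T (e : E →L[𝕂] F) u) :
    IsOpen (T '' Ω) := by
  rw [isOpen_iff_mem_nhds]
  rintro _ ⟨u, hu, rfl⟩
  obtain ⟨e, he⟩ := hT u hu
  rw [← he.map_nhds_eq_of_equiv]
  exact Filter.image_mem_map (hΩ.mem_nhds hu)

theorem ContDiffAt.contDiffAt_invFunOn {u : E} {e : E ≃L[𝕂] F} (hT : ContDiffAt 𝕂 n T u)
    (he : HasFDerivAt T (e : E →L[𝕂] F) u) (hn : n ≠ 0) (hinj : Set.InjOn T Ω)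
    (hΩ : Ω ∈ 𝓝 u) : ContDiffAt 𝕂 n (Function.invFunOn T Ω) (T u) := by
  have hleft : ∀ᶠ x in 𝓝 u, Function.invFunOn T Ω (T x) = x :=
    Filter.mem_of_superset hΩ fun _ hx => hinj.leftInvOn_invFunOn hx
  exact (hT.to_localInverse he hn).congr_of_eventuallyEq
    ((hT.hasStrictFDerivAt' he hn).localInverse_unique hleft)

theorem ContDiffOn.exists_contDiffOn_invOn_image (hΩ : IsOpen Ω) (hT : ContDiffOn 𝕂 n T Ω)
    (hn : n ≠ 0) (hinj : Set.InjOn T Ω)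
    (hT' : ∀ u ∈ Ω, ∃ e : E ≃L[𝕂] F, HasFDerivAt T (e : E →L[𝕂] F) u) :
    IsOpen (T '' Ω) ∧ ∃ g : F → E, ContDiffOn 𝕂 n g (T '' Ω) ∧ Set.MapsTo g (T '' Ω) Ω ∧
      Set.InvOn g T Ω (T '' Ω) := by
  have hTu : ∀ u ∈ Ω, ContDiffAt 𝕂 n T u := fun u hu => hT.contDiffAt (hΩ.mem_nhds hu)
  refine ⟨isOpen_image_of_hasStrictFDerivAt_equiv (𝕂 := 𝕂) hΩ fun u hu => ?_,
    Function.invFunOn T Ω, ?_, hinj.bijOn_image.surjOn.mapsTo_invFunOn,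
    hinj.bijOn_image.invOn_invFunOn⟩
  · obtain ⟨e, he⟩ := hT' u hu
    exact ⟨e, (hTu u hu).hasStrictFDerivAt' he hn⟩
  · rintro _ ⟨u, hu, rfl⟩
    obtain ⟨e, he⟩ := hT' u hu
    exact ((hTu u hu).contDiffAt_invFunOn he hn hinj (hΩ.mem_nhds hu)).contDiffWithinAt

end InverseFunction

theorem ContDiffOn.exists_contDiffOn_invOn_image_of_injective_fderiv {𝕂 E : Type*} [RCLike 𝕂]
    [NormedAddCommGroup E] [NormedSpace 𝕂 E] [FiniteDimensional 𝕂 E] {n : WithTop ℕ∞}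
    {T : E → E} {Ω : Set E} (hΩ : IsOpen Ω) (hT : ContDiffOn 𝕂 n T Ω) (hn : n ≠ 0)
    (hinj : Set.InjOn T Ω) (hT' : ∀ u ∈ Ω, Function.Injective (fderiv 𝕂 T u)) :
    IsOpen (T '' Ω) ∧ ∃ g : E → E, ContDiffOn 𝕂 n g (T '' Ω) ∧ Set.MapsTo g (T '' Ω) Ω ∧
      Set.InvOn g T Ω (T '' Ω) :=
  have := FiniteDimensional.complete 𝕂 E
  hT.exists_contDiffOn_invOn_image hΩ hn hinj fun u hu =>
    ⟨(LinearEquiv.ofInjectiveEndo _ (hT' u hu)).toContinuousLinearEquiv,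
      ((hT.differentiableOn hn u hu).differentiableAt (hΩ.mem_nhds hu)).hasFDerivAt⟩

section DeformedGradient

variable {E : Type*} [NormedAddCommGroup E] [InnerProductSpace ℝ E] [CompleteSpace E]
  {lam : ℝ} {F : E → ℝ} {Ω : Set E}

theorem ContDiffOn.gradient_of_isOpen {n m : WithTop ℕ∞} (hF : ContDiffOn ℝ n F Ω)
    (hΩ : IsOpen Ω) (hmn : m + 1 ≤ n) : ContDiffOn ℝ m (gradient F) Ω :=
  (InnerProductSpace.toDual ℝ E).symm.contDiff.comp_contDiffOn (hF.fderiv_of_isOpen hΩ hmn)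

variable (lam F) in
def deformedGradient (u : E) : E :=
  (1 + lam * F u - lam * ⟪gradient F u, u⟫)⁻¹ • gradient F u

variable (lam F) in
/-- Up to the factor `(1 + λ F u) (1 + λ ⟪u, v⟫)`, the difference at `u` of the gradients of
`(1/λ) log (1 + λ ⟪·, v⟫)` and `(1/λ) log (1 + λ F)`; for `F = F_λ` the latter is `f`. -/
def tangencyDefect (v u : E) : E :=
  (1 + lam * F u) • v - (1 + lam * ⟪u, v⟫) • gradient F u

theorem tangencyDefect_deformedGradient_self {u : E}
    (hβ : 1 + lam * F u - lam * ⟪gradient F u, u⟫ ≠ 0) :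
    tangencyDefect lam F (deformedGradient lam F u) u = 0 := by
  rw [tangencyDefect, deformedGradient, inner_smul_right, smul_smul, ← sub_smul,
    real_inner_comm (gradient F u) u]
  convert zero_smul ℝ (gradient F u) using 2
  field_simp
  ring

theorem one_add_inner_deformedGradient_self_pos {u : E} (hb : 0 < 1 + lam * F u)
    (hβ : 0 < 1 + lam * F u - lam * ⟪gradient F u, u⟫) :
    0 < 1 + lam * ⟪u, deformedGradient lam F u⟫ := by
  have : 1 + lam * ⟪u, deformedGradient lam F u⟫ =
      (1 + lam * F u) / (1 + lam * F u - lam * ⟪gradient F u, u⟫) := by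
    rw [deformedGradient, inner_smul_right, real_inner_comm (gradient F u) u]
    field_simp
    ring
  rw [this]
  positivity

/-- Differentiating the defect along a curve `γ` with a locally constant target `v`, the terms
coming from `1 + λ F` and from `1 + λ ⟪γ, v⟫` cancel, leaving only the Hessian of `F`. -/
theorem hasDerivAt_inner_tangencyDefect {γ v : ℝ → E} {w : E} {s : ℝ}
    (hγ : HasDerivAt γ w s) (hv : HasDerivAt v 0 s) (hF : DifferentiableAt ℝ F (γ s))
    (hG : DifferentiableAt ℝ (gradient F) (γ s)) :
    HasDerivAt (fun t => ⟪w, tangencyDefect lam F (v t) (γ t)⟫)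
      (-(1 + lam * ⟪γ s, v s⟫) * ⟪fderiv ℝ (gradient F) (γ s) w, w⟫) s := by
  have hFγ := hF.hasFDerivAt.comp_hasDerivAt s hγ
  have hGγ := hG.hasFDerivAt.comp_hasDerivAt s hγ
  have h := (((hFγ.const_mul lam).const_add 1).mul ((hasDerivAt_const s w).inner ℝ hv)).sub
    ((((hγ.inner ℝ hv).const_mul lam).const_add 1).mul ((hasDerivAt_const s w).inner ℝ hGγ))
  have hexpand : (fun t => ⟪w, tangencyDefect lam F (v t) (γ t)⟫) = fun t =>
      (1 + lam * F (γ t)) * ⟪w, v t⟫ - (1 + lam * ⟪γ t, v t⟫) * ⟪w, gradient F (γ t)⟫ := by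
    funext t
    rw [tangencyDefect, inner_sub_right, real_inner_smul_right, real_inner_smul_right]
  rw [hexpand]
  refine h.congr_deriv ?_
  simp only [Function.comp_apply, inner_zero_left, inner_zero_right, ← inner_gradient_left]
  rw [real_inner_comm w (fderiv ℝ (gradient F) (γ s) w), real_inner_comm w (gradient F (γ s))]
  ring

theorem DifferentiableAt.deformedGradient {u : E} (hF : DifferentiableAt ℝ F u)
    (hG : DifferentiableAt ℝ (gradient F) u)
    (hβ : 1 + lam * F u - lam * ⟪gradient F u, u⟫ ≠ 0) :
    DifferentiableAt ℝ (deformedGradient lam F) u :=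
  ((((differentiableAt_const 1).add (hF.const_mul lam)).sub
    ((hG.inner ℝ differentiableAt_id).const_mul lam)).inv hβ).smul hG

theorem ContDiffOn.deformedGradient {n m : WithTop ℕ∞} (hΩ : IsOpen Ω)
    (hF : ContDiffOn ℝ n F Ω) (hmn : m + 1 ≤ n)
    (hβ : ∀ u ∈ Ω, 1 + lam * F u - lam * ⟪gradient F u, u⟫ ≠ 0) :
    ContDiffOn ℝ m (deformedGradient lam F) Ω := by
  have hG := hF.gradient_of_isOpen hΩ hmn
  have hFm := hF.of_le (le_self_add.trans hmn)
  exact (((contDiffOn_const.add (contDiffOn_const.mul hFm)).sub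
    (contDiffOn_const.mul (hG.inner ℝ contDiffOn_id))).inv hβ).smul hG

theorem injOn_deformedGradient (hΩ : IsOpen Ω) (hconv : Convex ℝ Ω)
    (hF : DifferentiableOn ℝ F Ω) (hG : DifferentiableOn ℝ (gradient F) Ω)
    (hb : ∀ u ∈ Ω, 0 < 1 + lam * F u)
    (hβ : ∀ u ∈ Ω, 0 < 1 + lam * F u - lam * ⟪gradient F u, u⟫)
    (hH : ∀ u ∈ Ω, ∀ w, w ≠ 0 → 0 < ⟪fderiv ℝ (gradient F) u w, w⟫) :
    Set.InjOn (deformedGradient lam F) Ω := by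
  intro u₁ hu₁ u₂ hu₂ heq
  by_contra hne
  set v := deformedGradient lam F u₁
  set w := u₂ - u₁
  have hS : Convex ℝ {z ∈ Ω | 0 < 1 + lam * ⟪z, v⟫} :=
    ((concaveOn_const 1 hconv).add (((lam • innerₛₗ ℝ v).concaveOn hconv).congr
      fun z _ => by simp [real_inner_comm])).convex_gt 0
  have hseg : ∀ s ∈ Set.Icc (0 : ℝ) 1, u₁ + s • w ∈ {z ∈ Ω | 0 < 1 + lam * ⟪z, v⟫} :=
    fun s hs => hS.add_smul_sub_mem
      ⟨hu₁, one_add_inner_deformedGradient_self_pos (hb u₁ hu₁) (hβ u₁ hu₁)⟩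
      ⟨hu₂, heq ▸ one_add_inner_deformedGradient_self_pos (hb u₂ hu₂) (hβ u₂ hu₂)⟩ hs
  have hderiv : ∀ s ∈ Set.Icc (0 : ℝ) 1,
      HasDerivAt (fun t => ⟪w, tangencyDefect lam F v (u₁ + t • w)⟫)
        (-(1 + lam * ⟪u₁ + s • w, v⟫) * ⟪fderiv ℝ (gradient F) (u₁ + s • w) w, w⟫) s :=
    fun s hs => hasDerivAt_inner_tangencyDefect (v := fun _ => v)
      (((hasDerivAt_id s).smul_const w).const_add u₁ |>.congr_deriv (one_smul ℝ w))
      (hasDerivAt_const s v)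
      ((hF _ (hseg s hs).1).differentiableAt (hΩ.mem_nhds (hseg s hs).1))
      ((hG _ (hseg s hs).1).differentiableAt (hΩ.mem_nhds (hseg s hs).1))
  obtain ⟨c, hc, hslope⟩ := exists_hasDerivAt_eq_slope _ _ zero_lt_one
    (fun s hs => (hderiv s hs).continuousAt.continuousWithinAt)
    (fun s hs => hderiv s (Set.Ioo_subset_Icc_self hs))
  have hc' := hseg c (Set.Ioo_subset_Icc_self hc)
  have hw : w ≠ 0 := sub_ne_zero.mpr (Ne.symm hne)
  have hK₁ : tangencyDefect lam F v u₁ = 0 := tangencyDefect_deformedGradient_self (hβ u₁ hu₁).ne'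
  have hK₂ : tangencyDefect lam F v u₂ = 0 :=
    heq ▸ tangencyDefect_deformedGradient_self (hβ u₂ hu₂).ne'
  rw [zero_smul, add_zero, one_smul, add_sub_cancel, hK₁, hK₂] at hslope
  simp only [inner_zero_right, sub_self, zero_div, neg_mul, neg_eq_zero] at hslope
  exact (mul_pos hc'.2 (hH _ hc'.1 w hw)).ne' hslope

theorem injective_fderiv_deformedGradient (hΩ : IsOpen Ω)
    (hF : DifferentiableOn ℝ F Ω) (hG : DifferentiableOn ℝ (gradient F) Ω)
    (hb : ∀ u ∈ Ω, 0 < 1 + lam * F u)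
    (hβ : ∀ u ∈ Ω, 0 < 1 + lam * F u - lam * ⟪gradient F u, u⟫)
    (hH : ∀ u ∈ Ω, ∀ w, w ≠ 0 → 0 < ⟪fderiv ℝ (gradient F) u w, w⟫) {u : E} (hu : u ∈ Ω) :
    Function.Injective (fderiv ℝ (deformedGradient lam F) u) := by
  rw [injective_iff_map_eq_zero]
  intro x hx
  by_contra hx0
  have hFu := (hF u hu).differentiableAt (hΩ.mem_nhds hu)
  have hGu := (hG u hu).differentiableAt (hΩ.mem_nhds hu)
  have hγ : HasDerivAt (fun t : ℝ => u + t • x) x 0 :=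
    ((hasDerivAt_id (0 : ℝ)).smul_const x).const_add u |>.congr_deriv (one_smul ℝ x)
  have hγ₀ : u = u + (0 : ℝ) • x := by rw [zero_smul, add_zero]
  have hv : HasDerivAt (fun t : ℝ => deformedGradient lam F (u + t • x)) 0 0 :=
    hx ▸ (hFu.deformedGradient hGu (hβ u hu).ne').hasFDerivAt.comp_hasDerivAt_of_eq 0 hγ hγ₀
  have hdefect := hasDerivAt_inner_tangencyDefect (lam := lam) hγ hv (hγ₀ ▸ hFu) (hγ₀ ▸ hGu)
  have hzero : (fun t : ℝ => ⟪x, tangencyDefect lam F (deformedGradient lam F (u + t • x))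
      (u + t • x)⟫) =ᶠ[𝓝 0] fun _ => 0 := by
    filter_upwards [hγ.continuousAt.preimage_mem_nhds (hγ₀ ▸ hΩ.mem_nhds hu)] with t ht
    rw [tangencyDefect_deformedGradient_self (hβ _ ht).ne', inner_zero_right]
  have := hdefect.unique ((hasDerivAt_const (0 : ℝ) (0 : ℝ)).congr_of_eventuallyEq hzero)
  rw [← hγ₀, neg_mul, neg_eq_zero] at this
  exact (mul_pos (one_add_inner_deformedGradient_self_pos (hb u hu) (hβ u hu))
    (hH u hu x hx0)).ne' this

end DeformedGradient

section LamPotential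

variable {E : Type*} {lam : ℝ} {f : E → ℝ}

variable (lam f) in
def lamPotential (z : E) : ℝ :=
  (1 / lam) * (Real.exp (lam * f z) - 1)

theorem one_add_mul_lamPotential (hlam : lam ≠ 0) (z : E) :
    1 + lam * lamPotential lam f z = Real.exp (lam * f z) := by
  rw [lamPotential]
  field_simp
  ring

variable [NormedAddCommGroup E] [InnerProductSpace ℝ E]

theorem ContDiffOn.lamPotential {n : WithTop ℕ∞} {Ω : Set E} (hf : ContDiffOn ℝ n f Ω) :
    ContDiffOn ℝ n (lamPotential lam f) Ω :=
  contDiffOn_const.mul ((contDiffOn_const.mul hf).exp.sub contDiffOn_const)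

variable [CompleteSpace E]

theorem gradient_lamPotential (hlam : lam ≠ 0) {u : E} (hf : DifferentiableAt ℝ f u) :
    gradient (lamPotential lam f) u = Real.exp (lam * f u) • gradient f u := by
  have hderiv : HasFDerivAt (lamPotential lam f) (Real.exp (lam * f u) • fderiv ℝ f u) u := by
    refine (((hf.hasFDerivAt.const_mul lam).exp.sub_const 1).const_mul (1 / lam)).congr_fderiv ?_
    rw [smul_smul, smul_smul]
    congr 1
    field_simp
  rw [gradient, hderiv.fderiv, map_smul, gradient]

theorem one_add_mul_lamPotential_sub_inner_gradient (hlam : lam ≠ 0) {u : E}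
    (hf : DifferentiableAt ℝ f u) :
    1 + lam * lamPotential lam f u - lam * ⟪gradient (lamPotential lam f) u, u⟫ =
      Real.exp (lam * f u) * (1 - lam * ⟪gradient f u, u⟫) := by
  rw [one_add_mul_lamPotential hlam, gradient_lamPotential hlam hf, real_inner_smul_left]
  ring

end LamPotential

theorem deformedGradient_lamPotential {d : ℕ} {lam : ℝ} (hlam : lam ≠ 0)
    {f : EuclideanSpace ℝ (Fin d) → ℝ} {u : EuclideanSpace ℝ (Fin d)}
    (hf : DifferentiableAt ℝ f u) :
    deformedGradient lam (lamPotential lam f) u = lamGrad lam f u := by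
  rw [deformedGradient, one_add_mul_lamPotential_sub_inner_gradient hlam hf,
    gradient_lamPotential hlam hf, smul_smul, mul_inv_rev, mul_assoc,
    inv_mul_cancel₀ (Real.exp_pos _).ne', mul_one, lamGrad]

/-- For a regular `c_λ`-convex function `f` on `Ω`, the λ-gradient map
`∇^{c_λ} f` is injective on `Ω`, its range `Ω' = ∇^{c_λ} f(Ω)` is open, and `∇^{c_λ} f` is a
smooth diffeomorphism from `Ω` onto `Ω'` (with smooth inverse). -/
theorem lamGrad_diffeomorphism {d : ℕ} (lam : ℝ) (hlam : lam ≠ 0)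
    (Ω : Set (EuclideanSpace ℝ (Fin d))) (f : EuclideanSpace ℝ (Fin d) → ℝ)
    (hreg : IsRegularCConvex lam Ω f) :
    Set.InjOn (lamGrad lam f) Ω ∧
    IsOpen (lamGrad lam f '' Ω) ∧
    ContDiffOn ℝ (⊤ : ℕ∞) (lamGrad lam f) Ω ∧
    ∃ g : EuclideanSpace ℝ (Fin d) → EuclideanSpace ℝ (Fin d),
      ContDiffOn ℝ (⊤ : ℕ∞) g (lamGrad lam f '' Ω) ∧
      Set.MapsTo g (lamGrad lam f '' Ω) Ω ∧
      Set.InvOn g (lamGrad lam f) Ω (lamGrad lam f '' Ω) := by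
  obtain ⟨-, hΩ, hconv, hf, hH, hden⟩ := hreg
  have hdiff : ∀ u ∈ Ω, DifferentiableAt ℝ f u := fun u hu =>
    (hf.differentiableOn (by simp) u hu).differentiableAt (hΩ.mem_nhds hu)
  have heqOn : Set.EqOn (deformedGradient lam (lamPotential lam f)) (lamGrad lam f) Ω :=
    fun u hu => deformedGradient_lamPotential hlam (hdiff u hu)
  have hF : ContDiffOn ℝ (⊤ : ℕ∞) (lamPotential lam f) Ω := hf.lamPotential
  have hG := (hF.gradient_of_isOpen hΩ (m := (⊤ : ℕ∞)) (by simp)).differentiableOn (by simp)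
  have hb : ∀ u ∈ Ω, 0 < 1 + lam * lamPotential lam f u := fun u _ =>
    (one_add_mul_lamPotential hlam u).symm ▸ Real.exp_pos _
  have hβ : ∀ u ∈ Ω,
      0 < 1 + lam * lamPotential lam f u - lam * ⟪gradient (lamPotential lam f) u, u⟫ :=
    fun u hu => (one_add_mul_lamPotential_sub_inner_gradient hlam (hdiff u hu)).symm ▸
      mul_pos (Real.exp_pos _) (hden u hu)
  have hFd := hF.differentiableOn (by simp)
  have hinj := (injOn_deformedGradient hΩ hconv hFd hG hb hβ hH).congr heqOn
  have hsmooth := (hF.deformedGradient hΩ (m := (⊤ : ℕ∞)) (by simp) fun u hu =>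
    (hβ u hu).ne').congr heqOn.symm
  have hderiv : ∀ u ∈ Ω, Function.Injective (fderiv ℝ (lamGrad lam f) u) := fun u hu => by
    rw [← (heqOn.eventuallyEq_of_mem (hΩ.mem_nhds hu)).fderiv_eq]
    exact injective_fderiv_deformedGradient hΩ hFd hG hb hβ hH hu
  obtain ⟨hopen, hinv⟩ :=
    hsmooth.exists_contDiffOn_invOn_image_of_injective_fderiv hΩ (by simp) hinj hderiv
  exact ⟨hinj, hopen, hsmooth, hinv⟩
end
end

section
/- Let λ ∈ ℝ \ {0}, let Ω ⊂ ℝ^d be convex, and let f : Ω → ℝ be such that (1/λ)(e^{λ f} − 1) is convex on Ω. If f is differentiable at u' ∈ Ω, then for every u ∈ Ω one has (1/λ) + ∇f(u')·(u − u') ≤ (1/λ)·e^{λ(f(u) − f(u'))}. Consequently the λ-logarithmic divergence satisfies L_{λ,f}[u : u'] ≥ 0 for all u ∈ Ω; moreover, if (1/λ)(e^{λ f} − 1) is strictly convex, then L_{λ,f}[u : u'] > 0 whenever u ≠ u'. -/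
/-!
With `h t = (1/λ)(e^{λt} - 1)`, the increments factor as `h a - h b = e^{λb} h(a - b)` and
`h` is strictly increasing with inverse `p ↦ (1/λ) log(1 + λp)` on `1 + λp > 0`. The tangent
inequality of the convex function `h ∘ f` at `u'`, whose differential there is
`e^{λ f(u')} ∇f(u')`, therefore reads `∇f(u')·(u - u') ≤ h(f(u) - f(u'))` after dividing by
`e^{λ f(u')}`; applying the inverse of `h` gives `L_{λ,f}[u : u'] ≥ 0`, and strict convexity
makes every step strict.
-/

open Real
open scoped RealInnerProductSpace

section Tangent

variable {E : Type*} [NormedAddCommGroup E] [NormedSpace ℝ E] {Ω : Set E} {g : E → ℝ}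
  {g' : E →L[ℝ] ℝ} {x y : E}

theorem ConvexOn.le_sub_of_hasFDerivAt (hg : ConvexOn ℝ Ω g) (hx : x ∈ Ω) (hy : y ∈ Ω)
    (hd : HasFDerivAt g g' x) : g' (y - x) ≤ g y - g x := by
  let ℓ : ℝ →ᵃ[ℝ] E := AffineMap.lineMap x y
  have hline : ConvexOn ℝ (ℓ ⁻¹' Ω) (g ∘ ℓ) := hg.comp_affineMap ℓ
  have hderiv : HasDerivAt (g ∘ ℓ) (g' (y - x)) 0 := by
    rw [← AffineMap.lineMap_apply_zero x y (k := ℝ)] at hd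
    exact hd.comp_hasDerivAt 0 AffineMap.hasDerivAt_lineMap
  simpa [slope, ℓ] using
    hline.le_slope_of_hasDerivAt (by simpa [ℓ]) (by simpa [ℓ]) zero_lt_one hderiv

theorem StrictConvexOn.lt_sub_of_hasFDerivAt (hg : StrictConvexOn ℝ Ω g) (hx : x ∈ Ω)
    (hy : y ∈ Ω) (hxy : x ≠ y) (hd : HasFDerivAt g g' x) : g' (y - x) < g y - g x := by
  set z : E := (1 / 2 : ℝ) • x + (1 / 2 : ℝ) • y
  have hz : z ∈ Ω := hg.1 hx hy (by norm_num) (by norm_num) (by norm_num)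
  have hzx : z - x = (1 / 2 : ℝ) • (y - x) := by module
  have htangent : g' (z - x) ≤ g z - g x := hg.convexOn.le_sub_of_hasFDerivAt hx hz hd
  have hmid : g z < (1 / 2 : ℝ) * g x + (1 / 2 : ℝ) * g y :=
    hg.2 hx hy hxy (by norm_num) (by norm_num) (by norm_num)
  rw [hzx, map_smul, smul_eq_mul] at htangent
  linarith

end Tangent

noncomputable def scaledExpSubOne (lam t : ℝ) : ℝ := 1 / lam * (exp (lam * t) - 1)

section ScaledExpSubOne

variable {lam : ℝ}

theorem hasDerivAt_scaledExpSubOne (hlam : lam ≠ 0) (t : ℝ) :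
    HasDerivAt (scaledExpSubOne lam) (exp (lam * t)) t := by
  have h := (((hasDerivAt_id t).const_mul lam).exp.sub_const 1).const_mul (1 / lam)
  exact h.congr_deriv (by simp only [id, mul_one]; field_simp)

theorem strictMono_scaledExpSubOne (hlam : lam ≠ 0) : StrictMono (scaledExpSubOne lam) :=
  strictMono_of_hasDerivAt_pos (hasDerivAt_scaledExpSubOne hlam) fun _ => exp_pos _

theorem scaledExpSubOne_inv_mul_log (hlam : lam ≠ 0) {p : ℝ} (hp : 0 < 1 + lam * p) :
    scaledExpSubOne lam (1 / lam * log (1 + lam * p)) = p := by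
  rw [scaledExpSubOne, ← mul_assoc, mul_one_div_cancel hlam, one_mul, exp_log hp]
  field_simp
  ring

theorem scaledExpSubOne_sub_scaledExpSubOne (lam a b : ℝ) :
    scaledExpSubOne lam a - scaledExpSubOne lam b =
      exp (lam * b) * scaledExpSubOne lam (a - b) := by
  simp only [scaledExpSubOne, mul_sub, exp_sub]
  field_simp
  ring

theorem inv_mul_log_le_iff_le_scaledExpSubOne (hlam : lam ≠ 0) {p t : ℝ}
    (hp : 0 < 1 + lam * p) :
    1 / lam * log (1 + lam * p) ≤ t ↔ p ≤ scaledExpSubOne lam t := by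
  rw [← (strictMono_scaledExpSubOne hlam).le_iff_le, scaledExpSubOne_inv_mul_log hlam hp]

theorem inv_mul_log_lt_iff_lt_scaledExpSubOne (hlam : lam ≠ 0) {p t : ℝ}
    (hp : 0 < 1 + lam * p) :
    1 / lam * log (1 + lam * p) < t ↔ p < scaledExpSubOne lam t := by
  rw [← (strictMono_scaledExpSubOne hlam).lt_iff_lt, scaledExpSubOne_inv_mul_log hlam hp]

end ScaledExpSubOne

section Composite

variable {E : Type*} [NormedAddCommGroup E] [NormedSpace ℝ E] {Ω : Set E} {f : E → ℝ}
  {f' : E →L[ℝ] ℝ} {x y : E} {lam : ℝ}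

theorem hasFDerivAt_scaledExpSubOne_comp (hlam : lam ≠ 0) (hf : HasFDerivAt f f' x) :
    HasFDerivAt (scaledExpSubOne lam ∘ f) (exp (lam * f x) • f') x :=
  (hasDerivAt_scaledExpSubOne hlam (f x)).comp_hasFDerivAt x hf

theorem ConvexOn.le_scaledExpSubOne_of_hasFDerivAt (hlam : lam ≠ 0)
    (hconv : ConvexOn ℝ Ω (scaledExpSubOne lam ∘ f)) (hx : x ∈ Ω) (hy : y ∈ Ω)
    (hf : HasFDerivAt f f' x) : f' (y - x) ≤ scaledExpSubOne lam (f y - f x) := by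
  have h := hconv.le_sub_of_hasFDerivAt hx hy (hasFDerivAt_scaledExpSubOne_comp hlam hf)
  rw [Function.comp_apply, Function.comp_apply, scaledExpSubOne_sub_scaledExpSubOne,
    smul_apply, smul_eq_mul] at h
  exact le_of_mul_le_mul_left h (exp_pos _)

theorem StrictConvexOn.lt_scaledExpSubOne_of_hasFDerivAt (hlam : lam ≠ 0)
    (hconv : StrictConvexOn ℝ Ω (scaledExpSubOne lam ∘ f)) (hx : x ∈ Ω) (hy : y ∈ Ω)
    (hxy : x ≠ y) (hf : HasFDerivAt f f' x) : f' (y - x) < scaledExpSubOne lam (f y - f x) := by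
  have h := hconv.lt_sub_of_hasFDerivAt hx hy hxy (hasFDerivAt_scaledExpSubOne_comp hlam hf)
  rw [Function.comp_apply, Function.comp_apply, scaledExpSubOne_sub_scaledExpSubOne,
    smul_apply, smul_eq_mul] at h
  exact lt_of_mul_lt_mul_left h (exp_pos _).le

end Composite

theorem lamLogDivergence_nonneg_general {d : ℕ} (lam : ℝ) (hlam : lam ≠ 0)
    (Ω : Set (EuclideanSpace ℝ (Fin d)))
    (f : EuclideanSpace ℝ (Fin d) → ℝ)
    (hconv : ConvexOn ℝ Ω (fun u => (1 / lam) * (Real.exp (lam * f u) - 1)))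
    (u' : EuclideanSpace ℝ (Fin d)) (hu' : u' ∈ Ω)
    (hdiff : DifferentiableAt ℝ f u') :
    (∀ u ∈ Ω,
      1 / lam + ⟪gradient f u', u - u'⟫ ≤ (1 / lam) * Real.exp (lam * (f u - f u'))) ∧
    (∀ u ∈ Ω, 0 < 1 + lam * ⟪gradient f u', u - u'⟫ →
      0 ≤ f u - f u' - (1 / lam) * Real.log (1 + lam * ⟪gradient f u', u - u'⟫)) ∧
    (StrictConvexOn ℝ Ω (fun u => (1 / lam) * (Real.exp (lam * f u) - 1)) →
      ∀ u ∈ Ω, u ≠ u' → 0 < 1 + lam * ⟪gradient f u', u - u'⟫ →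
        0 < f u - f u' - (1 / lam) * Real.log (1 + lam * ⟪gradient f u', u - u'⟫)) := by
  have key : ∀ u ∈ Ω, ⟪gradient f u', u - u'⟫ ≤ scaledExpSubOne lam (f u - f u') := by
    intro u hu
    rw [inner_gradient_left]
    exact hconv.le_scaledExpSubOne_of_hasFDerivAt hlam hu' hu hdiff.hasFDerivAt
  refine ⟨fun u hu => ?_, fun u hu hp => ?_, fun hstrict u hu hne hp => ?_⟩
  · have h := key u hu
    rw [scaledExpSubOne, mul_sub, mul_one] at h
    linarith
  · exact sub_nonneg.2 ((inv_mul_log_le_iff_le_scaledExpSubOne hlam hp).2 (key u hu))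
  · refine sub_pos.2 ((inv_mul_log_lt_iff_lt_scaledExpSubOne hlam hp).2 ?_)
    rw [inner_gradient_left]
    exact hstrict.lt_scaledExpSubOne_of_hasFDerivAt hlam hu' hu hne.symm hdiff.hasFDerivAt

/-- Let `λ ≠ 0`, `Ω ⊆ ℝ^d` convex and `f : Ω → ℝ` with `(1/λ)(e^{λf} − 1)`
convex on `Ω`. If `f` is differentiable at `u' ∈ Ω`, then for every `u ∈ Ω`,
`(1/λ) + ∇f(u')·(u − u') ≤ (1/λ)·e^{λ(f(u) − f(u'))}`. Consequently the λ-logarithmic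
divergence `L_{λ,f}[u : u'] = f(u) − f(u') − (1/λ)·log(1 + λ∇f(u')·(u − u'))` is `≥ 0`
(in the case `1 + λ∇f(u')·(u − u') ≤ 0` it is `+∞ ≥ 0` by convention), and it is `> 0`
for `u ≠ u'` whenever `(1/λ)(e^{λf} − 1)` is strictly convex. -/
theorem lamLogDivergence_nonneg {d : ℕ} (lam : ℝ) (hlam : lam ≠ 0)
    (Ω : Set (EuclideanSpace ℝ (Fin d))) (hΩ : Convex ℝ Ω)
    (f : EuclideanSpace ℝ (Fin d) → ℝ)
    (hconv : ConvexOn ℝ Ω (fun u => (1 / lam) * (Real.exp (lam * f u) - 1)))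
    (u' : EuclideanSpace ℝ (Fin d)) (hu' : u' ∈ Ω)
    (hdiff : DifferentiableAt ℝ f u') :
    (∀ u ∈ Ω,
      1 / lam + ⟪gradient f u', u - u'⟫ ≤ (1 / lam) * Real.exp (lam * (f u - f u'))) ∧
    (∀ u ∈ Ω, 0 < 1 + lam * ⟪gradient f u', u - u'⟫ →
      0 ≤ f u - f u' - (1 / lam) * Real.log (1 + lam * ⟪gradient f u', u - u'⟫)) ∧
    (StrictConvexOn ℝ Ω (fun u => (1 / lam) * (Real.exp (lam * f u) - 1)) →
      ∀ u ∈ Ω, u ≠ u' → 0 < 1 + lam * ⟪gradient f u', u - u'⟫ →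
        0 < f u - f u' - (1 / lam) * Real.log (1 + lam * ⟪gradient f u', u - u'⟫)) :=
  lamLogDivergence_nonneg_general lam hlam Ω f hconv u' hu' hdiff
end

section
/- Fix λ < 1 with λ ≠ 0 and q = 1 − λ. Let p(·;ϑ) = exp_q(ϑ·F(·))·e^{−φ_λ(ϑ)}, ϑ ∈ Ω, be a λ-exponential family satisfying the support condition, with common support 𝒳₀ = {x : p(x;ϑ) > 0}. For ϑ ∈ Ω set θ = ϑ·e^{−λ φ_λ(ϑ)} and φ̃_q(θ) = (1/(−λ))·(e^{−λ φ_λ(ϑ)} − 1). Then for all x ∈ 𝒳₀, p(x;ϑ) = exp_q(θ·F(x) − φ̃_q(θ)), and ∫_{𝒳₀} exp_q(θ·F(x) − φ̃_q(θ)) dν(x) = 1; that is, each member of the λ-exponential family is a member of the q-exponential family with subtractive normalization. Moreover, if F₁,…,F_d are linearly independent with respect to ν on 𝒳₀ (no nontrivial ν-a.e. affine relation among 1, F₁,…,F_d on 𝒳₀), then the map ϑ ↦ θ = ϑ·e^{−λ φ_λ(ϑ)} is injective on Ω. -/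
/-
Write `a = e^{-λ φ_λ(ϑ)}`. Since `1 + λ (a t + (a - 1)/λ) = a (1 + λ t)`, the deformed exponential
satisfies `exp_q(a t + (a - 1)/λ) = a^{1/λ} exp_q(t)`, and `a^{1/λ} = e^{-φ_λ(ϑ)}` is exactly the
divisive normalization; this gives the pointwise identity, and normalization on `𝒳₀` follows from
the support condition. For injectivity, if `ϑ₁, ϑ₂` have the same `θ`, then `exp_q(θ·F - c)` is
normalized on `𝒳₀` for both shifts `c = φ̃_q`; as `exp_q` is strictly increasing where it is
positive and finite, the normalizing shift is unique, so the factors `e^{-λ φ_λ(ϑᵢ)}` agree.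
-/

open MeasureTheory Real
open scoped RealInnerProductSpace ENNReal BigOperators

noncomputable section

/-- The `q`-deformed exponential `exp_q(t) = [1 + λ t]₊^{1/λ}` (with `q = 1 − λ`), valued in
`[0,∞]`, with the convention `0^{1/λ} = +∞` when `λ < 0`. -/
def qexp (lam t : ℝ) : ℝ≥0∞ :=
  if 0 < 1 + lam * t then ENNReal.ofReal ((1 + lam * t) ^ (1 / lam))
  else if 0 < lam then 0 else ⊤

theorem measurable_qexp (lam : ℝ) : Measurable (qexp lam) := by
  unfold qexp
  refine Measurable.ite ?_ ?_ measurable_const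
  · exact measurableSet_lt measurable_const (by fun_prop)
  · exact ENNReal.measurable_ofReal.comp
      ((by fun_prop : Measurable fun t : ℝ => 1 + lam * t).pow measurable_const)

theorem qexp_mul_add_sub_one_div {lam : ℝ} (hlam : lam ≠ 0) (t : ℝ) {a : ℝ} (ha : 0 < a) :
    qexp lam (a * t + (a - 1) / lam) = qexp lam t * ENNReal.ofReal (a ^ (1 / lam)) := by
  have hlin : 1 + lam * (a * t + (a - 1) / lam) = a * (1 + lam * t) := by
    field_simp; ring
  unfold qexp
  rw [hlin]
  by_cases hb : 0 < 1 + lam * t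
  · rw [if_pos (mul_pos ha hb), if_pos hb, Real.mul_rpow ha.le hb.le,
      ← ENNReal.ofReal_mul (by positivity), mul_comm]
  · rw [if_neg (not_lt.mpr (mul_nonpos_of_nonneg_of_nonpos ha.le (not_lt.mp hb))), if_neg hb]
    split_ifs
    · rw [zero_mul]
    · exact (ENNReal.top_mul (ENNReal.ofReal_pos.mpr (Real.rpow_pos_of_pos ha _)).ne').symm

theorem qexp_exp_mul_sub {lam : ℝ} (hlam : lam ≠ 0) (s t : ℝ) :
    qexp lam (Real.exp (-lam * s) * t - 1 / (-lam) * (Real.exp (-lam * s) - 1))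
      = qexp lam t * ENNReal.ofReal (Real.exp (-s)) := by
  have hexp : Real.exp (-lam * s) ^ (1 / lam) = Real.exp (-s) := by
    rw [← Real.exp_mul]; congr 1; field_simp
  rw [← hexp, ← qexp_mul_add_sub_one_div hlam t (Real.exp_pos _)]
  congr 1
  ring

theorem qexp_mono {lam : ℝ} (hlam : lam ≠ 0) : Monotone (qexp lam) := by
  intro t' t h
  unfold qexp
  rcases hlam.lt_or_gt with hl | hl
  · have hb : 1 + lam * t ≤ 1 + lam * t' := by nlinarith
    by_cases h2 : 0 < 1 + lam * t
    · rw [if_pos h2, if_pos (h2.trans_le hb)]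
      exact ENNReal.ofReal_le_ofReal
        (Real.rpow_le_rpow_of_nonpos h2 hb (one_div_nonpos.mpr hl.le))
    · rw [if_neg h2, if_neg (not_lt.mpr hl.le)]; exact le_top
  · have hb : 1 + lam * t' ≤ 1 + lam * t := by nlinarith
    by_cases h2 : 0 < 1 + lam * t'
    · rw [if_pos h2, if_pos (h2.trans_le hb)]
      exact ENNReal.ofReal_le_ofReal (Real.rpow_le_rpow h2.le hb (by positivity))
    · rw [if_neg h2, if_pos hl]; exact zero_le

theorem one_add_mul_pos_of_qexp_ne {lam t : ℝ} (h0 : qexp lam t ≠ 0) (htop : qexp lam t ≠ ⊤) :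
    0 < 1 + lam * t := by
  by_contra h
  unfold qexp at h0 htop
  rw [if_neg h] at h0 htop
  split_ifs at h0 htop <;> contradiction

theorem qexp_lt_qexp {lam : ℝ} (hlam : lam ≠ 0) {t' t : ℝ} (h : t' < t)
    (h0 : qexp lam t ≠ 0) (htop : qexp lam t ≠ ⊤) : qexp lam t' < qexp lam t := by
  have hpos := one_add_mul_pos_of_qexp_ne h0 htop
  have hv : 0 < (1 + lam * t) ^ (1 / lam) := Real.rpow_pos_of_pos hpos _
  unfold qexp
  rw [if_pos hpos]
  rcases hlam.lt_or_gt with hl | hl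
  · have hb : 1 + lam * t < 1 + lam * t' := by nlinarith
    rw [if_pos (hpos.trans hb)]
    exact (ENNReal.ofReal_lt_ofReal_iff hv).mpr
      (Real.rpow_lt_rpow_of_neg hpos hb (one_div_neg.mpr hl))
  · have hb : 1 + lam * t' < 1 + lam * t := by nlinarith
    by_cases h2 : 0 < 1 + lam * t'
    · rw [if_pos h2]
      exact (ENNReal.ofReal_lt_ofReal_iff hv).mpr (Real.rpow_lt_rpow h2.le hb (by positivity))
    · rw [if_neg h2, if_pos hl]
      exact ENNReal.ofReal_pos.mpr hv

section Shift

variable {X : Type*} [MeasurableSpace X] {μ : Measure X} {lam : ℝ} {g : X → ℝ} {c₁ c₂ : ℝ}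

theorem lintegral_qexp_sub_lt_of_lt (hlam : lam ≠ 0) (hg : Measurable g) (hμ : μ ≠ 0)
    (hc : c₁ < c₂) (hfin : ∫⁻ x, qexp lam (g x - c₁) ∂μ ≠ ⊤)
    (hpos : ∀ᵐ x ∂μ, qexp lam (g x - c₁) ≠ 0) :
    ∫⁻ x, qexp lam (g x - c₂) ∂μ < ∫⁻ x, qexp lam (g x - c₁) ∂μ := by
  have hmeas : Measurable fun x => qexp lam (g x - c₁) :=
    (measurable_qexp lam).comp (hg.sub measurable_const)
  have hle : ∫⁻ x, qexp lam (g x - c₂) ∂μ ≤ ∫⁻ x, qexp lam (g x - c₁) ∂μ :=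
    lintegral_mono fun x => qexp_mono hlam (by linarith)
  refine lintegral_strict_mono hμ hmeas.aemeasurable (ne_top_of_le_ne_top hfin hle) ?_
  filter_upwards [hpos, ae_lt_top hmeas hfin] with x h0 htop
  exact qexp_lt_qexp hlam (by linarith) h0 htop.ne

theorem eq_of_lintegral_qexp_sub_eq (hlam : lam ≠ 0) (hg : Measurable g) (hμ : μ ≠ 0)
    (h : ∫⁻ x, qexp lam (g x - c₁) ∂μ = ∫⁻ x, qexp lam (g x - c₂) ∂μ)
    (hfin : ∫⁻ x, qexp lam (g x - c₁) ∂μ ≠ ⊤)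
    (hpos₁ : ∀ᵐ x ∂μ, qexp lam (g x - c₁) ≠ 0) (hpos₂ : ∀ᵐ x ∂μ, qexp lam (g x - c₂) ≠ 0) :
    c₁ = c₂ := by
  rcases lt_trichotomy c₁ c₂ with hc | hc | hc
  · exact absurd h (lintegral_qexp_sub_lt_of_lt hlam hg hμ hc hfin hpos₁).ne'
  · exact hc
  · exact absurd h (lintegral_qexp_sub_lt_of_lt hlam hg hμ hc (h ▸ hfin) hpos₂).ne

end Shift

theorem ENNReal.ofReal_exp_neg_log_toReal {z : ℝ≥0∞} (h0 : z ≠ 0) (htop : z ≠ ⊤) :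
    ENNReal.ofReal (Real.exp (-Real.log z.toReal)) = z⁻¹ := by
  have hz : 0 < z.toReal := ENNReal.toReal_pos h0 htop
  rw [Real.exp_neg, Real.exp_log hz, ENNReal.ofReal_inv_of_pos hz, ENNReal.ofReal_toReal htop]

theorem setLIntegral_eq_lintegral_of_pos_ae_eq {X : Type*} [MeasurableSpace X] {μ : Measure X}
    {f : X → ℝ≥0∞} {s : Set X} (hs : {x | 0 < f x} =ᵐ[μ] s) :
    ∫⁻ x in s, f x ∂μ = ∫⁻ x, f x ∂μ := by
  rw [← Measure.restrict_congr_set hs]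
  exact setLIntegral_eq_of_support_subset fun x hx => pos_iff_ne_zero.mpr hx

theorem lambdaExp_as_qExp_general {d : ℕ} {X : Type*} [MeasurableSpace X] (ν : Measure X)
    (lam : ℝ) (hlam0 : lam ≠ 0)
    (F : X → EuclideanSpace ℝ (Fin d)) (hF : Measurable F)
    (Z : EuclideanSpace ℝ (Fin d) → ℝ≥0∞)
    (hZ : ∀ ϑ, Z ϑ = ∫⁻ x, qexp lam ⟪ϑ, F x⟫ ∂ν)
    (Ω : Set (EuclideanSpace ℝ (Fin d))) (hΩ : Ω = {ϑ | Z ϑ < ⊤})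
    (hZpos : ∀ ϑ ∈ Ω, 0 < Z ϑ)
    (φ : EuclideanSpace ℝ (Fin d) → ℝ)
    (hφ : ∀ ϑ ∈ Ω, φ ϑ = Real.log (Z ϑ).toReal)
    (p : EuclideanSpace ℝ (Fin d) → X → ℝ≥0∞)
    (hp : ∀ ϑ x, p ϑ x = qexp lam ⟪ϑ, F x⟫ * ENNReal.ofReal (Real.exp (-φ ϑ)))
    (X₀ : Set X)
    (hsupp : ∀ ϑ ∈ Ω, {x | 0 < p ϑ x} =ᵐ[ν] X₀) :
    (∀ ϑ ∈ Ω, ∀ x ∈ X₀,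
      p ϑ x = qexp lam (⟪Real.exp (-lam * φ ϑ) • ϑ, F x⟫
        - (1 / (-lam)) * (Real.exp (-lam * φ ϑ) - 1))) ∧
    (∀ ϑ ∈ Ω, ∫⁻ x in X₀, qexp lam (⟪Real.exp (-lam * φ ϑ) • ϑ, F x⟫
        - (1 / (-lam)) * (Real.exp (-lam * φ ϑ) - 1)) ∂ν = 1) ∧
    ((∀ (c : EuclideanSpace ℝ (Fin d)) (b : ℝ),
        (∀ᵐ x ∂ν.restrict X₀, ⟪c, F x⟫ + b = 0) → c = 0 ∧ b = 0) →
      Set.InjOn (fun ϑ => Real.exp (-lam * φ ϑ) • ϑ) Ω) := by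
  have hZtop : ∀ ϑ ∈ Ω, Z ϑ ≠ ⊤ := by
    subst hΩ
    exact fun ϑ hϑ => ne_of_lt hϑ
  have hq : ∀ ϑ x, p ϑ x = qexp lam (⟪Real.exp (-lam * φ ϑ) • ϑ, F x⟫
      - (1 / (-lam)) * (Real.exp (-lam * φ ϑ) - 1)) := fun ϑ x => by
    rw [real_inner_smul_left, qexp_exp_mul_sub hlam0, hp]
  have hnorm : ∀ ϑ ∈ Ω, ∫⁻ x in X₀, p ϑ x ∂ν = 1 := fun ϑ hϑ => by
    simp_rw [setLIntegral_eq_lintegral_of_pos_ae_eq (hsupp ϑ hϑ), hp, hφ ϑ hϑ,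
      ENNReal.ofReal_exp_neg_log_toReal (hZpos ϑ hϑ).ne' (hZtop ϑ hϑ)]
    rw [lintegral_mul_const' _ _ (ENNReal.inv_ne_top.mpr (hZpos ϑ hϑ).ne'), ← hZ,
      ENNReal.mul_inv_cancel (hZpos ϑ hϑ).ne' (hZtop ϑ hϑ)]
  have hpos : ∀ ϑ ∈ Ω, ∀ᵐ x ∂ν.restrict X₀, p ϑ x ≠ 0 := fun ϑ hϑ => by
    have hmeas : Measurable (p ϑ) := by
      rw [funext (hp ϑ)]
      exact ((measurable_qexp lam).comp (measurable_const.inner hF)).mul_const _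
    rw [← Measure.restrict_congr_set (hsupp ϑ hϑ)]
    filter_upwards [ae_restrict_mem (measurableSet_lt measurable_const hmeas)] with x hx
    exact pos_iff_ne_zero.mp hx
  refine ⟨fun ϑ _ x _ => hq ϑ x, fun ϑ hϑ => by simpa only [hq] using hnorm ϑ hϑ, ?_⟩
  intro _ ϑ₁ h₁ ϑ₂ h₂ (hθ : Real.exp (-lam * φ ϑ₁) • ϑ₁ = Real.exp (-lam * φ ϑ₂) • ϑ₂)
  have hν : ν.restrict X₀ ≠ 0 := fun h0 => by simpa [h0] using hnorm ϑ₁ h₁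
  simp_rw [funext (hq _)] at hnorm hpos
  have hnorm₂ := hnorm ϑ₂ h₂
  have hpos₂ := hpos ϑ₂ h₂
  rw [← hθ] at hnorm₂ hpos₂
  have hshift := eq_of_lintegral_qexp_sub_eq hlam0 (measurable_const.inner hF) hν
    ((hnorm ϑ₁ h₁).trans hnorm₂.symm) (by rw [hnorm ϑ₁ h₁]; exact ENNReal.one_ne_top) (hpos ϑ₁ h₁) hpos₂
  have hfactor : Real.exp (-lam * φ ϑ₁) = Real.exp (-lam * φ ϑ₂) := by
    simpa using mul_left_cancel₀ (one_div_ne_zero (neg_ne_zero.mpr hlam0)) hshift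
  rw [← hfactor] at hθ
  exact smul_right_injective _ (Real.exp_pos _).ne' hθ

/-- A λ-exponential family (divisive normalization) satisfying the support
condition can be rewritten as a q-exponential family (subtractive normalization): with
`θ = ϑ·e^{−λφ_λ(ϑ)}` and `φ̃_q(θ) = (1/(−λ))(e^{−λφ_λ(ϑ)} − 1)` one has
`p(x;ϑ) = exp_q(θ·F(x) − φ̃_q(θ))` on the common support `𝒳₀`, with
`∫_{𝒳₀} exp_q(θ·F − φ̃_q(θ)) dν = 1`; and if `F₁,…,F_d` are linearly independent w.r.t. `ν` on
`𝒳₀` then `ϑ ↦ θ` is injective on `Ω`. -/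
theorem lambdaExp_as_qExp {d : ℕ} {X : Type*} [MeasurableSpace X] (ν : Measure X)
    (lam : ℝ) (hlam0 : lam ≠ 0) (hlam1 : lam < 1)
    (F : X → EuclideanSpace ℝ (Fin d)) (hF : Measurable F)
    (Z : EuclideanSpace ℝ (Fin d) → ℝ≥0∞)
    (hZ : ∀ ϑ, Z ϑ = ∫⁻ x, qexp lam ⟪ϑ, F x⟫ ∂ν)
    (Ω : Set (EuclideanSpace ℝ (Fin d))) (hΩ : Ω = {ϑ | Z ϑ < ⊤})
    (hZpos : ∀ ϑ ∈ Ω, 0 < Z ϑ)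
    (φ : EuclideanSpace ℝ (Fin d) → ℝ)
    (hφ : ∀ ϑ ∈ Ω, φ ϑ = Real.log (Z ϑ).toReal)
    (p : EuclideanSpace ℝ (Fin d) → X → ℝ≥0∞)
    (hp : ∀ ϑ x, p ϑ x = qexp lam ⟪ϑ, F x⟫ * ENNReal.ofReal (Real.exp (-φ ϑ)))
    (X₀ : Set X) (hX₀ : MeasurableSet X₀)
    (hsupp : ∀ ϑ ∈ Ω, {x | 0 < p ϑ x} =ᵐ[ν] X₀) :
    (∀ ϑ ∈ Ω, ∀ x ∈ X₀,
      p ϑ x = qexp lam (⟪Real.exp (-lam * φ ϑ) • ϑ, F x⟫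
        - (1 / (-lam)) * (Real.exp (-lam * φ ϑ) - 1))) ∧
    (∀ ϑ ∈ Ω, ∫⁻ x in X₀, qexp lam (⟪Real.exp (-lam * φ ϑ) • ϑ, F x⟫
        - (1 / (-lam)) * (Real.exp (-lam * φ ϑ) - 1)) ∂ν = 1) ∧
    ((∀ (c : EuclideanSpace ℝ (Fin d)) (b : ℝ),
        (∀ᵐ x ∂ν.restrict X₀, ⟪c, F x⟫ + b = 0) → c = 0 ∧ b = 0) →
      Set.InjOn (fun ϑ => Real.exp (-lam * φ ϑ) • ϑ) Ω) :=
  lambdaExp_as_qExp_general ν lam hlam0 F hF Z hZ Ω hΩ hZpos φ hφ p hp X₀ hsupp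
end
end

section
/- Fix λ ≠ 0, λ < 1, q = 1 − λ. Let { p_θ(x) = exp_q(θ·F(x) − φ_q(θ)) : θ ∈ Θ } be a q-exponential family, let θ₀ be an interior point of Θ, and assume φ_q is continuous on a neighborhood of θ₀. If 1 − λ φ_q(θ₀) > 0 or θ₀ ≠ 0, then there exist a neighborhood U of θ₀ contained in Θ, a constant c ∈ ℝ, and functions ϑ : U → ℝ^d and φ : ϑ(U) → ℝ such that, with F̃(x) = F(x) − c θ₀, for every θ ∈ U and every x: p_θ(x) = exp_q(ϑ(θ)·F̃(x))·e^{−φ(ϑ(θ))}. (In the case 1 − λφ_q(θ₀) > 0 one may take c = 0, ϑ(θ) = θ/(1 − λφ_q(θ)) and φ(ϑ(θ)) = (1/(−λ))·log(1 − λφ_q(θ)).) -/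
open MeasureTheory Real
open scoped RealInnerProductSpace ENNReal BigOperators

noncomputable section

lemma qexp_shift (lam a s : ℝ) (hlam : lam ≠ 0) (hA : 0 < 1 - lam * a) :
    qexp lam (s - a)
      = qexp lam ((1 - lam * a)⁻¹ * s) * ENNReal.ofReal ((1 - lam * a) ^ (1 / lam)) := by
  set A := 1 - lam * a with hAdef
  have h1 : 1 + lam * (s - a) = A * (1 + lam * (A⁻¹ * s)) := by
    field_simp [hAdef]; ring
  have hApow : 0 < A ^ (1 / lam) := Real.rpow_pos_of_pos hA _
  unfold qexp
  rw [h1]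
  by_cases hpos : 0 < 1 + lam * (A⁻¹ * s)
  · rw [if_pos (mul_pos hA hpos), if_pos hpos,
      Real.mul_rpow hA.le hpos.le, ENNReal.ofReal_mul hApow.le, mul_comm]
  · have h2 : ¬ 0 < A * (1 + lam * (A⁻¹ * s)) := by
      push_neg at hpos ⊢
      exact mul_nonpos_of_nonneg_of_nonpos hA.le hpos
    rw [if_neg h2, if_neg hpos]
    by_cases hl : 0 < lam
    · simp [hl]
    · rw [if_neg hl, ENNReal.top_mul (ENNReal.ofReal_pos.2 hApow).ne']

/-- Local reparameterization of a q-exponential family (subtractive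
normalization) as a λ-exponential family (divisive normalization): if `θ₀` is interior to the
natural parameter set `Θ`, `φ_q` is continuous near `θ₀`, and `1 − λφ_q(θ₀) > 0` or `θ₀ ≠ 0`,
then on a neighborhood `U ⊆ Θ` of `θ₀` one can write
`p_θ = exp_q(ϑ(θ)·F̃(·))·e^{−φ(ϑ(θ))}` with `F̃ = F − c θ₀`. -/
theorem qExp_as_lambdaExp_locally {d : ℕ} {X : Type*} [MeasurableSpace X] (ν : Measure X)
    (lam : ℝ) (hlam0 : lam ≠ 0) (hlam1 : lam < 1)
    (F : X → EuclideanSpace ℝ (Fin d)) (hF : Measurable F)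
    (Θ : Set (EuclideanSpace ℝ (Fin d)))
    (φq : EuclideanSpace ℝ (Fin d) → ℝ)
    (hnorm : ∀ θ ∈ Θ, ∫⁻ x, qexp lam (⟪θ, F x⟫ - φq θ) ∂ν = 1)
    (θ₀ : EuclideanSpace ℝ (Fin d)) (hθ₀ : θ₀ ∈ interior Θ)
    (V : Set (EuclideanSpace ℝ (Fin d))) (hV : V ∈ nhds θ₀) (hcont : ContinuousOn φq V)
    (hcase : 0 < 1 - lam * φq θ₀ ∨ θ₀ ≠ 0) :
    ∃ U ∈ nhds θ₀, U ⊆ Θ ∧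
      ∃ (c : ℝ) (vt : EuclideanSpace ℝ (Fin d) → EuclideanSpace ℝ (Fin d))
        (φ : EuclideanSpace ℝ (Fin d) → ℝ),
        ∀ θ ∈ U, ∀ x,
          qexp lam (⟪θ, F x⟫ - φq θ)
            = qexp lam ⟪vt θ, F x - c • θ₀⟫ * ENNReal.ofReal (Real.exp (-φ (vt θ))) := by
  obtain ⟨c, hc⟩ : ∃ c : ℝ, 0 < 1 - lam * (φq θ₀ - c * ⟪θ₀, θ₀⟫) := by
    rcases hcase with h | h
    · exact ⟨0, by simpa using h⟩
    · refine ⟨φq θ₀ / ⟪θ₀, θ₀⟫, ?_⟩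
      have h0 : (0:ℝ) < ⟪θ₀, θ₀⟫ := by
        rw [real_inner_self_eq_norm_sq]
        exact pow_pos (norm_pos_iff.2 h) 2
      rw [div_mul_cancel₀ _ h0.ne']
      simp
  set D : EuclideanSpace ℝ (Fin d) → ℝ := fun θ => 1 - lam * (φq θ - c * ⟪θ, θ₀⟫) with hD
  have hDat : ContinuousAt D θ₀ := by
    have h1 : ContinuousAt φq θ₀ := hcont.continuousAt hV
    have h2 : Continuous fun θ : EuclideanSpace ℝ (Fin d) => ⟪θ, θ₀⟫ :=
      continuous_id.inner continuous_const
    exact continuousAt_const.sub (continuousAt_const.mul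
      (h1.sub (continuousAt_const.mul h2.continuousAt)))
  set U := interior Θ ∩ D ⁻¹' Set.Ioi 0 with hU
  refine ⟨U, Filter.inter_mem (isOpen_interior.mem_nhds hθ₀)
      (hDat.preimage_mem_nhds (Ioi_mem_nhds hc)),
    fun θ hθ => interior_subset hθ.1, c, fun θ => (D θ)⁻¹ • θ,
    fun y => Real.log ((∫⁻ x, qexp lam ⟪y, F x - c • θ₀⟫ ∂ν).toReal), ?_⟩
  rintro θ ⟨hθint, hDθ'⟩ x
  have hDθ : 0 < D θ := hDθ'
  have hθΘ : θ ∈ Θ := interior_subset hθint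
  have hDdef : D θ = 1 - lam * (φq θ - c * ⟪θ, θ₀⟫) := rfl
  have key : ∀ y, qexp lam (⟪θ, F y⟫ - φq θ)
      = qexp lam ⟪(D θ)⁻¹ • θ, F y - c • θ₀⟫ * ENNReal.ofReal ((D θ) ^ (1 / lam)) := by
    intro y
    have hinner : ⟪θ, F y⟫ - φq θ = ⟪θ, F y - c • θ₀⟫ - (φq θ - c * ⟪θ, θ₀⟫) := by
      rw [inner_sub_right, real_inner_smul_right]; ring
    rw [hinner, real_inner_smul_left, hDdef]
    exact qexp_shift lam _ _ hlam0 (hDdef ▸ hDθ)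
  have hApow : 0 < (D θ) ^ (1 / lam) := Real.rpow_pos_of_pos hDθ _
  have hr0 : ENNReal.ofReal ((D θ) ^ (1 / lam)) ≠ 0 := (ENNReal.ofReal_pos.2 hApow).ne'
  have hI : (∫⁻ y, qexp lam ⟪(D θ)⁻¹ • θ, F y - c • θ₀⟫ ∂ν)
      = ENNReal.ofReal (((D θ) ^ (1 / lam))⁻¹) := by
    have h1 := hnorm θ hθΘ
    rw [lintegral_congr key, lintegral_mul_const' _ _ ENNReal.ofReal_ne_top] at h1
    rw [ENNReal.ofReal_inv_of_pos hApow]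
    rw [mul_comm] at h1
    have := (ENNReal.eq_div_iff hr0 ENNReal.ofReal_ne_top).2 h1
    rwa [one_div] at this
  have hφ : Real.exp (-(Real.log
      ((∫⁻ y, qexp lam ⟪(D θ)⁻¹ • θ, F y - c • θ₀⟫ ∂ν).toReal))) = (D θ) ^ (1 / lam) := by
    rw [hI, ENNReal.toReal_ofReal (inv_nonneg.2 hApow.le), Real.log_inv, neg_neg,
      Real.exp_log hApow]
  rw [key x, hφ]
end
end

section
/- Fix λ < 1 with λ ≠ 0 and q = 1 − λ. Consider a λ-exponential family whose natural parameter set Ω is nonempty, open and convex, and assume the divisive λ-potential φ_λ is differentiable on Ω with differentiation under the integral sign, i.e. e^{φ_λ(ϑ)}·∇φ_λ(ϑ) = ∫ [1 + λ ϑ·F(x)]₊^{1/λ − 1} F(x) dν(x) for all ϑ ∈ Ω. Then: (a) the function ϑ ↦ (1/λ)(e^{λ φ_λ(ϑ)} − 1) is convex on Ω; and (b) 1 − λ ∇φ_λ(ϑ)·ϑ > 0 for every ϑ ∈ Ω. -/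
/-!
Write `u_ϑ = 1 + λ ϑ·F`, an affine function of `ϑ`. The hypothesis on `φ` says that
`e^{λ φ(ϑ)}` is the `L^{1/λ}(ν)` quasi-norm of `[u_ϑ]₊`. For `0 < λ < 1` Minkowski's inequality
makes it convex in `ϑ`. For `λ < 0`, finiteness of the potential forces `u_ϑ > 0` a.e., and the
reverse Minkowski inequality makes it concave. Dividing by `λ` gives (a).

For (b), `[u]₊^{1/λ-1} · u = [u]₊^{1/λ}`, so pairing the differentiation-under-the-integral
identity with `ϑ` gives `e^{φ(ϑ)} (1 - λ ∇φ(ϑ)·ϑ) = ∫ [u_ϑ]₊^{1/λ-1} dν`: the integral of a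
nonnegative function whose product with `u_ϑ` has integral `e^{φ(ϑ)} > 0`.
-/

open MeasureTheory Real
open scoped RealInnerProductSpace ENNReal BigOperators

noncomputable section

namespace ENNReal

variable {α : Type*} [MeasurableSpace α] {μ : Measure α} {p : ℝ}

theorem ae_ne_zero_of_lintegral_rpow_ne_top (hp : p < 0) {f : α → ℝ≥0∞} (hf : AEMeasurable f μ)
    (h : ∫⁻ a, f a ^ p ∂μ ≠ ⊤) : ∀ᵐ a ∂μ, f a ≠ 0 := by
  filter_upwards [ae_lt_top' (hf.pow_const p) h] with a ha hfa
  simp [hfa, ENNReal.zero_rpow_of_neg hp] at ha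

/-- Reverse Hölder inequality, from Hölder's inequality with the weights `p / (p - 1)` and
`1 / (1 - p)`. -/
theorem rpow_mul_rpow_le_lintegral_of_neg (hp : p < 0) {f g : α → ℝ≥0∞}
    (hf : AEMeasurable f μ) (hg : AEMeasurable g μ) (hg0 : ∀ᵐ a ∂μ, g a ≠ 0)
    (hgtop : ∀ᵐ a ∂μ, g a ≠ ⊤) :
    (∫⁻ a, f a ^ p ∂μ) ^ ((p - 1) / p) * (∫⁻ a, g a ^ p ∂μ) ^ (1 / p) ≤
      ∫⁻ a, f a ^ (p - 1) * g a ∂μ := by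
  have hp1 : p - 1 ≠ 0 := by linarith
  have hp1' : 1 - p ≠ 0 := by linarith
  have hp0 : p ≠ 0 := hp.ne
  have hα : 0 < p / (p - 1) := div_pos_of_neg_of_neg hp (by linarith)
  have hβ : 0 ≤ 1 / (1 - p) := by rw [one_div_nonneg]; linarith
  have hαβ : p / (p - 1) + 1 / (1 - p) = 1 := by field_simp; ring
  have holder : ∫⁻ a, f a ^ p ∂μ ≤
      (∫⁻ a, f a ^ (p - 1) * g a ∂μ) ^ (p / (p - 1)) * (∫⁻ a, g a ^ p ∂μ) ^ (1 / (1 - p)) := by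
    calc ∫⁻ a, f a ^ p ∂μ
        = ∫⁻ a, (f a ^ (p - 1) * g a) ^ (p / (p - 1)) * (g a ^ p) ^ (1 / (1 - p)) ∂μ := by
          refine lintegral_congr_ae ?_
          filter_upwards [hg0, hgtop] with a h0 htop
          rw [ENNReal.mul_rpow_of_nonneg _ _ hα.le, ← ENNReal.rpow_mul, ← ENNReal.rpow_mul,
            mul_assoc, ← ENNReal.rpow_add _ _ h0 htop]
          have e1 : (p - 1) * (p / (p - 1)) = p := by field_simp
          have e2 : p / (p - 1) + p * (1 / (1 - p)) = 0 := by field_simp; ring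
          rw [e1, e2, ENNReal.rpow_zero, mul_one]
      _ ≤ _ := ENNReal.lintegral_mul_norm_pow_le ((hf.pow_const _).mul hg) (hg.pow_const _)
          hα.le hβ hαβ
  have hγ : 0 ≤ (p - 1) / p := div_nonneg_of_nonpos (by linarith) hp.le
  have key : (∫⁻ a, f a ^ p ∂μ) ^ ((p - 1) / p) ≤
      (∫⁻ a, f a ^ (p - 1) * g a ∂μ) * (∫⁻ a, g a ^ p ∂μ) ^ (-(1 / p)) := by
    calc _ ≤ ((∫⁻ a, f a ^ (p - 1) * g a ∂μ) ^ (p / (p - 1)) *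
            (∫⁻ a, g a ^ p ∂μ) ^ (1 / (1 - p))) ^ ((p - 1) / p) :=
          ENNReal.rpow_le_rpow holder hγ
      _ = _ := by
          rw [ENNReal.mul_rpow_of_nonneg _ _ hγ, ← ENNReal.rpow_mul, ← ENNReal.rpow_mul]
          have e1 : p / (p - 1) * ((p - 1) / p) = 1 := by field_simp
          have e2 : 1 / (1 - p) * ((p - 1) / p) = -(1 / p) := by field_simp; ring
          rw [e1, e2, ENNReal.rpow_one]
  calc _ = (∫⁻ a, f a ^ p ∂μ) ^ ((p - 1) / p) * ((∫⁻ a, g a ^ p ∂μ) ^ (-(1 / p)))⁻¹ := by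
        rw [← ENNReal.rpow_neg, neg_neg]
    _ ≤ _ := ENNReal.div_le_of_le_mul key

/-- Reverse Minkowski inequality. -/
theorem mul_eLpNorm'_add_mul_eLpNorm'_le_of_neg (hp : p < 0) {g h : α → ℝ≥0∞} {b c : ℝ≥0∞}
    (hg : AEMeasurable g μ) (hh : AEMeasurable h μ) (hb : b ≠ ⊤) (hc : c ≠ ⊤)
    (hg0 : ∀ᵐ a ∂μ, g a ≠ 0) (hgtop : ∀ᵐ a ∂μ, g a ≠ ⊤)
    (hh0 : ∀ᵐ a ∂μ, h a ≠ 0) (hhtop : ∀ᵐ a ∂μ, h a ≠ ⊤)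
    (hfin : ∫⁻ a, (b * g a + c * h a) ^ p ∂μ ≠ ⊤) :
    b * eLpNorm' g p μ + c * eLpNorm' h p μ ≤ eLpNorm' (fun a => b * g a + c * h a) p μ := by
  set f : α → ℝ≥0∞ := fun a => b * g a + c * h a with hf_def
  have hf : AEMeasurable f μ := (hg.const_mul b).add (hh.const_mul c)
  simp only [eLpNorm', enorm_eq_self]
  set S := ∫⁻ a, f a ^ p ∂μ
  rcases eq_or_ne S 0 with hS0 | hS0
  · rw [hS0, ENNReal.zero_rpow_of_neg (one_div_neg.mpr hp)]
    exact le_top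
  have hS' : S ^ ((p - 1) / p) ≠ 0 := (ENNReal.rpow_pos (pos_iff_ne_zero.mpr hS0) hfin).ne'
  have hS'top : S ^ ((p - 1) / p) ≠ ⊤ := ENNReal.rpow_ne_top_of_ne_zero hS0 hfin
  have hsplit : S = b * ∫⁻ a, f a ^ (p - 1) * g a ∂μ + c * ∫⁻ a, f a ^ (p - 1) * h a ∂μ := by
    rw [← lintegral_const_mul'' b (f := fun a => f a ^ (p - 1) * g a) ((hf.pow_const _).mul hg),
      ← lintegral_const_mul'' c (f := fun a => f a ^ (p - 1) * h a) ((hf.pow_const _).mul hh),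
      ← lintegral_add_left' (f := fun a => b * (f a ^ (p - 1) * g a))
        (((hf.pow_const _).mul hg).const_mul b)]
    refine lintegral_congr_ae ?_
    filter_upwards [ae_ne_zero_of_lintegral_rpow_ne_top hp hf hfin, hgtop, hhtop]
      with a hfa hga hha
    have hftop : f a ≠ ⊤ := by
      simp only [hf_def]
      exact ENNReal.add_ne_top.mpr ⟨ENNReal.mul_ne_top hb hga, ENNReal.mul_ne_top hc hha⟩
    calc f a ^ p = f a ^ (p - 1) * f a := by
          rw [ENNReal.rpow_sub _ _ hfa hftop, ENNReal.rpow_one, ENNReal.div_mul_cancel hfa hftop]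
      _ = _ := by simp only [hf_def]; ring
  have hsum : S ^ ((p - 1) / p) * ((b * (∫⁻ a, g a ^ p ∂μ) ^ (1 / p) +
      c * (∫⁻ a, h a ^ p ∂μ) ^ (1 / p))) ≤ S := by
    conv_rhs => rw [hsplit]
    rw [mul_add, mul_left_comm, mul_left_comm _ c]
    gcongr
    · exact rpow_mul_rpow_le_lintegral_of_neg hp hf hg hg0 hgtop
    · exact rpow_mul_rpow_le_lintegral_of_neg hp hf hh hh0 hhtop
  have hS1p : S ^ (1 / p) = S / S ^ ((p - 1) / p) := by
    have e : 1 / p = 1 - (p - 1) / p := by rw [sub_div, div_self hp.ne]; ring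
    rw [e, ENNReal.rpow_sub _ _ hS0 hfin, ENNReal.rpow_one]
  rw [hS1p, ENNReal.le_div_iff_mul_le (Or.inl hS') (Or.inl hS'top), mul_comm]
  exact hsum

theorem eLpNorm'_const_mul (hp : 0 < p) {g : α → ℝ≥0∞} (hg : AEMeasurable g μ) (b : ℝ≥0∞) :
    eLpNorm' (fun a => b * g a) p μ = b * eLpNorm' g p μ := by
  simp only [eLpNorm', enorm_eq_self]
  simp_rw [ENNReal.mul_rpow_of_nonneg _ _ hp.le]
  rw [lintegral_const_mul'' _ (hg.pow_const p), ENNReal.mul_rpow_of_nonneg _ _ (by positivity),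
    ← ENNReal.rpow_mul, mul_one_div_cancel hp.ne', ENNReal.rpow_one]

theorem eLpNorm'_le_mul_add_mul (hp : 1 ≤ p) {f g h : α → ℝ≥0∞} {b c : ℝ≥0∞}
    (hg : AEMeasurable g μ) (hh : AEMeasurable h μ) (hfgh : ∀ᵐ a ∂μ, f a ≤ b * g a + c * h a) :
    eLpNorm' f p μ ≤ b * eLpNorm' g p μ + c * eLpNorm' h p μ := by
  have hp0 : 0 < p := zero_lt_one.trans_le hp
  calc eLpNorm' f p μ ≤ eLpNorm' ((fun a => b * g a) + fun a => c * h a) p μ :=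
        eLpNorm'_mono_enorm_ae hp0.le hfgh
    _ ≤ eLpNorm' (fun a => b * g a) p μ + eLpNorm' (fun a => c * h a) p μ :=
        eLpNorm'_add_le (hg.const_mul b).aestronglyMeasurable
          (hh.const_mul c).aestronglyMeasurable hp
    _ = _ := by rw [eLpNorm'_const_mul hp0 hg, eLpNorm'_const_mul hp0 hh]

end ENNReal

lemma qexp_eq_ofReal_rpow {lam : ℝ} (hlam : lam ≠ 0) (t : ℝ) :
    qexp lam t = ENNReal.ofReal (1 + lam * t) ^ (1 / lam) := by
  unfold qexp
  split_ifs with h hpos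
  · rw [ENNReal.ofReal_rpow_of_pos h]
  · rw [ENNReal.ofReal_eq_zero.mpr (not_lt.mp h), ENNReal.zero_rpow_of_pos (one_div_pos.mpr hpos)]
  · have hneg : lam < 0 := lt_of_le_of_ne (not_lt.mp hpos) hlam
    rw [ENNReal.ofReal_eq_zero.mpr (not_lt.mp h), ENNReal.zero_rpow_of_neg (one_div_neg.mpr hneg)]

lemma max_rpow_sub_one_mul_self {r : ℝ} (hr0 : r ≠ 0) (hr1 : r ≠ 1) (s : ℝ) :
    max s 0 ^ (r - 1) * s = max s 0 ^ r := by
  rcases lt_or_ge 0 s with hs | hs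
  · rw [max_eq_left hs.le, Real.rpow_sub_one hs.ne', div_mul_cancel₀ _ hs.ne']
  · rw [max_eq_right hs, Real.zero_rpow (sub_ne_zero.mpr hr1), Real.zero_rpow hr0, zero_mul]

lemma one_add_mul_inner_add {E : Type*} [NormedAddCommGroup E] [InnerProductSpace ℝ E]
    (lam : ℝ) {a b : ℝ} (hab : a + b = 1) (x y v : E) :
    1 + lam * ⟪a • x + b • y, v⟫ = a * (1 + lam * ⟪x, v⟫) + b * (1 + lam * ⟪y, v⟫) := by
  rw [inner_add_left, real_inner_smul_left, real_inner_smul_left]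
  linear_combination -hab

section QExpFamily

variable {X : Type*} [MeasurableSpace X] {ν : Measure X} {lam : ℝ}

lemma ae_pos_of_lintegral_qexp_ne_top (hlam : lam < 0) {t : X → ℝ} (ht : Measurable t)
    (h : ∫⁻ x, qexp lam (t x) ∂ν ≠ ⊤) : ∀ᵐ x ∂ν, 0 < 1 + lam * t x := by
  simp_rw [qexp_eq_ofReal_rpow hlam.ne] at h
  filter_upwards [ENNReal.ae_ne_zero_of_lintegral_rpow_ne_top (one_div_neg.mpr hlam)
    ((ht.const_mul lam).const_add 1).ennreal_ofReal.aemeasurable h] with x hx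
  exact ENNReal.ofReal_pos.mp (pos_iff_ne_zero.mpr hx)

lemma eLpNorm'_ofReal_eq_ofReal_exp (hlam : lam ≠ 0) {t : X → ℝ} {c : ℝ}
    (h : ∫⁻ x, qexp lam (t x) ∂ν = ENNReal.ofReal (exp c)) :
    eLpNorm' (fun x => ENNReal.ofReal (1 + lam * t x)) (1 / lam) ν =
      ENNReal.ofReal (exp (lam * c)) := by
  simp_rw [qexp_eq_ofReal_rpow hlam] at h
  simp only [eLpNorm', enorm_eq_self]
  rw [h, one_div_one_div, ENNReal.ofReal_rpow_of_pos (exp_pos c), ← exp_mul, mul_comm]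

lemma qexp_ae_eq_ofReal_max_rpow (hlam : lam ≠ 0) {t : X → ℝ} (ht : Measurable t)
    (h : ∫⁻ x, qexp lam (t x) ∂ν ≠ ⊤) :
    ∀ᵐ x ∂ν, qexp lam (t x) = ENNReal.ofReal (max (1 + lam * t x) 0 ^ (1 / lam)) := by
  have hcases : ∀ᵐ x ∂ν, 0 < 1 + lam * t x ∨ 0 < lam := by
    rcases hlam.lt_or_gt with hneg | hpos
    · filter_upwards [ae_pos_of_lintegral_qexp_ne_top hneg ht h] with x hx using Or.inl hx
    · exact ae_of_all _ fun _ => Or.inr hpos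
  filter_upwards [hcases] with x hx
  by_cases hpos : 0 < 1 + lam * t x
  · rw [qexp, if_pos hpos, max_eq_left hpos.le]
  · rw [qexp, if_neg hpos, if_pos (hx.resolve_left hpos), max_eq_right (not_lt.mp hpos),
      Real.zero_rpow (one_div_ne_zero hlam), ENNReal.ofReal_zero]

end QExpFamily

section LambdaExponentialFamily

variable {E : Type*} [NormedAddCommGroup E] [InnerProductSpace ℝ E]
  {X : Type*} [MeasurableSpace X] {ν : Measure X} {lam : ℝ} {F : X → E}

lemma integral_eq_integral_mul_sub_inner [CompleteSpace E] {g : X → ℝ} {ϑ : E}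
    (hgu : Integrable (fun x => g x * (1 + lam * ⟪ϑ, F x⟫)) ν)
    (hgF : Integrable (fun x => g x • F x) ν) :
    Integrable g ν ∧
      ∫ x, g x ∂ν = ∫ x, g x * (1 + lam * ⟪ϑ, F x⟫) ∂ν - lam * ⟪ϑ, ∫ x, g x • F x ∂ν⟫ := by
  have hg : g = fun x => g x * (1 + lam * ⟪ϑ, F x⟫) - lam * ⟪ϑ, g x • F x⟫ := by
    funext x
    rw [real_inner_smul_right]
    ring
  have hinner := (hgF.const_inner ϑ).const_mul lam
  refine ⟨hg ▸ hgu.sub hinner, ?_⟩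
  conv_lhs => rw [hg]
  rw [integral_sub hgu hinner, integral_const_mul, integral_inner hgF]

lemma integral_pos_of_integral_mul_ne_zero {g v : X → ℝ} (hg : 0 ≤ g) (hgi : Integrable g ν)
    (h : ∫ x, g x * v x ∂ν ≠ 0) : 0 < ∫ x, g x ∂ν := by
  refine (integral_nonneg hg).lt_of_ne fun h0 => h ?_
  have hg0 : g =ᵐ[ν] 0 := (integral_eq_zero_iff_of_nonneg hg hgi).mp h0.symm
  refine integral_eq_zero_of_ae ?_
  filter_upwards [hg0] with x hx
  simp [hx]

lemma mul_inner_integral_max_rpow_smul_lt [CompleteSpace E] (hlam0 : lam ≠ 0) (hlam1 : lam ≠ 1)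
    {ϑ : E} (hF : Measurable fun x => ⟪ϑ, F x⟫) {Z : ℝ} (hZ0 : 0 < Z)
    (hZ : ∫⁻ x, qexp lam ⟪ϑ, F x⟫ ∂ν = ENNReal.ofReal Z)
    (hInt : Integrable (fun x => max (1 + lam * ⟪ϑ, F x⟫) 0 ^ (1 / lam - 1) • F x) ν) :
    lam * ⟪ϑ, ∫ x, max (1 + lam * ⟪ϑ, F x⟫) 0 ^ (1 / lam - 1) • F x ∂ν⟫ < Z := by
  set u : X → ℝ := fun x => 1 + lam * ⟪ϑ, F x⟫
  set K : X → ℝ := fun x => max (u x) 0 ^ (1 / lam)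
  have hK_nonneg : 0 ≤ K := fun x => rpow_nonneg (le_max_right _ _) _
  have hK_meas : Measurable K :=
    (((hF.const_mul lam).const_add 1).max measurable_const).pow_const _
  have hK_lint : ∫⁻ x, ENNReal.ofReal (K x) ∂ν = ENNReal.ofReal Z := by
    rw [← hZ]
    refine (lintegral_congr_ae (qexp_ae_eq_ofReal_max_rpow hlam0 hF ?_)).symm
    rw [hZ]
    exact ENNReal.ofReal_ne_top
  have hK_int : Integrable K ν :=
    ⟨hK_meas.aestronglyMeasurable, (hasFiniteIntegral_iff_ofReal (ae_of_all _ hK_nonneg)).mpr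
      (hK_lint ▸ ENNReal.ofReal_lt_top)⟩
  have hK_val : ∫ x, K x ∂ν = Z := by
    rw [integral_eq_lintegral_of_nonneg_ae (ae_of_all _ hK_nonneg) hK_meas.aestronglyMeasurable,
      hK_lint, ENNReal.toReal_ofReal hZ0.le]
  have hgu : (fun x => max (u x) 0 ^ (1 / lam - 1) * u x) = K := by
    funext x
    refine max_rpow_sub_one_mul_self (one_div_ne_zero hlam0) ?_ _
    rwa [ne_eq, div_eq_one_iff_eq hlam0, eq_comm]
  obtain ⟨hg_int, hg_val⟩ := integral_eq_integral_mul_sub_inner (hgu ▸ hK_int) hInt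
  have hg_pos := integral_pos_of_integral_mul_ne_zero (v := u)
    (fun x => rpow_nonneg (le_max_right (u x) 0) _) hg_int (by rw [hgu, hK_val]; exact hZ0.ne')
  rw [hg_val, hgu, hK_val] at hg_pos
  linarith

variable {Ω : Set E} {φ : E → ℝ}

theorem convexOn_exp_mul_of_pos (hpos : 0 < lam) (hlam1 : lam ≤ 1)
    (hF : ∀ ϑ, Measurable fun x => ⟪ϑ, F x⟫) (hconv : Convex ℝ Ω)
    (hφ : ∀ ϑ ∈ Ω, ∫⁻ x, qexp lam ⟪ϑ, F x⟫ ∂ν = ENNReal.ofReal (exp (φ ϑ))) :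
    ConvexOn ℝ Ω fun ϑ => exp (lam * φ ϑ) := by
  refine ⟨hconv, fun x hx y hy a b ha hb hab => ?_⟩
  show exp (lam * φ (a • x + b • y)) ≤ a * exp (lam * φ x) + b * exp (lam * φ y)
  have hu : ∀ ϑ : E, Measurable fun z => ENNReal.ofReal (1 + lam * ⟪ϑ, F z⟫) :=
    fun ϑ => (((hF ϑ).const_mul lam).const_add 1).ennreal_ofReal
  have key := ENNReal.eLpNorm'_le_mul_add_mul (μ := ν) (one_le_one_div hpos hlam1)
    (b := ENNReal.ofReal a) (c := ENNReal.ofReal b) (hu x).aemeasurable (hu y).aemeasurable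
    (f := fun z => ENNReal.ofReal (1 + lam * ⟪a • x + b • y, F z⟫))
    (ae_of_all _ fun z => by
      rw [one_add_mul_inner_add lam hab, ← ENNReal.ofReal_mul ha, ← ENNReal.ofReal_mul hb]
      exact ENNReal.ofReal_add_le)
  rw [eLpNorm'_ofReal_eq_ofReal_exp hpos.ne' (hφ _ (hconv hx hy ha hb hab)),
    eLpNorm'_ofReal_eq_ofReal_exp hpos.ne' (hφ x hx),
    eLpNorm'_ofReal_eq_ofReal_exp hpos.ne' (hφ y hy), ← ENNReal.ofReal_mul ha,
    ← ENNReal.ofReal_mul hb, ← ENNReal.ofReal_add (by positivity) (by positivity)] at key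
  exact (ENNReal.ofReal_le_ofReal_iff (by positivity)).mp key

theorem concaveOn_exp_mul_of_neg (hneg : lam < 0) (hF : ∀ ϑ, Measurable fun x => ⟪ϑ, F x⟫)
    (hconv : Convex ℝ Ω)
    (hφ : ∀ ϑ ∈ Ω, ∫⁻ x, qexp lam ⟪ϑ, F x⟫ ∂ν = ENNReal.ofReal (exp (φ ϑ))) :
    ConcaveOn ℝ Ω fun ϑ => exp (lam * φ ϑ) := by
  refine ⟨hconv, fun x hx y hy a b ha hb hab => ?_⟩
  show a * exp (lam * φ x) + b * exp (lam * φ y) ≤ exp (lam * φ (a • x + b • y))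
  set u : E → X → ℝ≥0∞ := fun ϑ z => ENNReal.ofReal (1 + lam * ⟪ϑ, F z⟫)
  have hu : ∀ ϑ, Measurable (u ϑ) :=
    fun ϑ => (((hF ϑ).const_mul lam).const_add 1).ennreal_ofReal
  have hfin : ∀ ϑ ∈ Ω, ∫⁻ z, qexp lam ⟪ϑ, F z⟫ ∂ν ≠ ⊤ :=
    fun ϑ hϑ => hφ ϑ hϑ ▸ ENNReal.ofReal_ne_top
  have hpos : ∀ ϑ ∈ Ω, ∀ᵐ z ∂ν, 0 < 1 + lam * ⟪ϑ, F z⟫ :=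
    fun ϑ hϑ => ae_pos_of_lintegral_qexp_ne_top hneg (hF ϑ) (hfin ϑ hϑ)
  have hu0 : ∀ ϑ ∈ Ω, ∀ᵐ z ∂ν, u ϑ z ≠ 0 :=
    fun ϑ hϑ => (hpos ϑ hϑ).mono fun z hz => (ENNReal.ofReal_pos.mpr hz).ne'
  have hsplit : u (a • x + b • y) =ᵐ[ν]
      fun z => ENNReal.ofReal a * u x z + ENNReal.ofReal b * u y z := by
    filter_upwards [hpos x hx, hpos y hy] with z hxz hyz
    simp only [u]
    rw [one_add_mul_inner_add lam hab, ENNReal.ofReal_add (by positivity) (by positivity),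
      ENNReal.ofReal_mul ha, ENNReal.ofReal_mul hb]
  have hfin' :
      ∫⁻ z, (ENNReal.ofReal a * u x z + ENNReal.ofReal b * u y z) ^ (1 / lam) ∂ν ≠ ⊤ := by
    refine ne_of_eq_of_ne (lintegral_congr_ae ?_) (hfin _ (hconv hx hy ha hb hab))
    filter_upwards [hsplit] with z hz
    rw [← hz, qexp_eq_ofReal_rpow hneg.ne]
  have key := ENNReal.mul_eLpNorm'_add_mul_eLpNorm'_le_of_neg (one_div_neg.mpr hneg)
    (hu x).aemeasurable (hu y).aemeasurable ENNReal.ofReal_ne_top ENNReal.ofReal_ne_top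
    (hu0 x hx) (ae_of_all _ fun _ => ENNReal.ofReal_ne_top)
    (hu0 y hy) (ae_of_all _ fun _ => ENNReal.ofReal_ne_top) hfin'
  rw [← eLpNorm'_congr_ae hsplit,
    eLpNorm'_ofReal_eq_ofReal_exp hneg.ne (hφ _ (hconv hx hy ha hb hab)),
    eLpNorm'_ofReal_eq_ofReal_exp hneg.ne (hφ x hx),
    eLpNorm'_ofReal_eq_ofReal_exp hneg.ne (hφ y hy), ← ENNReal.ofReal_mul ha,
    ← ENNReal.ofReal_mul hb, ← ENNReal.ofReal_add (by positivity) (by positivity)] at key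
  exact (ENNReal.ofReal_le_ofReal_iff (by positivity)).mp key

end LambdaExponentialFamily

theorem divisivePotential_cConvex_general {d : ℕ} {X : Type*} [MeasurableSpace X] (ν : Measure X)
    (lam : ℝ) (hlam0 : lam ≠ 0) (hlam1 : lam < 1)
    (F : X → EuclideanSpace ℝ (Fin d)) (hF : Measurable F)
    (Ω : Set (EuclideanSpace ℝ (Fin d)))
    (hconv : Convex ℝ Ω)
    (φ : EuclideanSpace ℝ (Fin d) → ℝ)
    (hφ : ∀ ϑ ∈ Ω, ∫⁻ x, qexp lam ⟪ϑ, F x⟫ ∂ν = ENNReal.ofReal (Real.exp (φ ϑ)))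
    (hInt : ∀ ϑ ∈ Ω,
      Integrable (fun x => ((max (1 + lam * ⟪ϑ, F x⟫) 0) ^ (1 / lam - 1)) • F x) ν)
    (hDUI : ∀ ϑ ∈ Ω, Real.exp (φ ϑ) • gradient φ ϑ
      = ∫ x, ((max (1 + lam * ⟪ϑ, F x⟫) 0) ^ (1 / lam - 1)) • F x ∂ν) :
    ConvexOn ℝ Ω (fun ϑ => (1 / lam) * (Real.exp (lam * φ ϑ) - 1)) ∧
    ∀ ϑ ∈ Ω, 0 < 1 - lam * ⟪gradient φ ϑ, ϑ⟫ := by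
  have hF' : ∀ ϑ, Measurable fun x => ⟪ϑ, F x⟫ := fun ϑ => measurable_const.inner hF
  constructor
  · rcases hlam0.lt_or_gt with hneg | hpos
    · refine (((concaveOn_exp_mul_of_neg hneg hF' hconv hφ).neg.smul
        (c := -(1 / lam)) ?_).add_const (-(1 / lam))).congr fun ϑ _ => ?_
      · rw [neg_nonneg, one_div_nonpos]
        exact hneg.le
      · simp only [Pi.add_apply, Pi.neg_apply, smul_eq_mul]
        ring
    · refine (((convexOn_exp_mul_of_pos hpos hlam1.le hF' hconv hφ).smul
        (one_div_pos.mpr hpos).le).add_const (-(1 / lam))).congr fun ϑ _ => ?_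
      simp only [Pi.add_apply, smul_eq_mul]
      ring
  · intro ϑ hϑ
    have h := mul_inner_integral_max_rpow_smul_lt hlam0 hlam1.ne (hF' ϑ) (exp_pos (φ ϑ))
      (hφ ϑ hϑ) (hInt ϑ hϑ)
    rw [← hDUI ϑ hϑ, real_inner_smul_right, real_inner_comm] at h
    have hprod : 0 < exp (φ ϑ) * (1 - lam * ⟪gradient φ ϑ, ϑ⟫) := by linarith
    exact (mul_pos_iff_of_pos_left (exp_pos _)).mp hprod

/-- For a λ-exponential family (`λ < 1`, `λ ≠ 0`) with nonempty open convex
natural parameter set `Ω`, divisive potential `φ_λ` (so `e^{φ_λ(ϑ)} = ∫ exp_q(ϑ·F) dν`),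
differentiable on `Ω` with differentiation under the integral sign
`e^{φ_λ(ϑ)}·∇φ_λ(ϑ) = ∫ [1 + λϑ·F]₊^{1/λ−1} F dν`: (a) `ϑ ↦ (1/λ)(e^{λφ_λ(ϑ)} − 1)` is convex
on `Ω`, and (b) `1 − λ∇φ_λ(ϑ)·ϑ > 0` on `Ω`. -/
theorem divisivePotential_cConvex {d : ℕ} {X : Type*} [MeasurableSpace X] (ν : Measure X)
    (lam : ℝ) (hlam0 : lam ≠ 0) (hlam1 : lam < 1)
    (F : X → EuclideanSpace ℝ (Fin d)) (hF : Measurable F)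
    (Ω : Set (EuclideanSpace ℝ (Fin d)))
    (hne : Ω.Nonempty) (hop : IsOpen Ω) (hconv : Convex ℝ Ω)
    (φ : EuclideanSpace ℝ (Fin d) → ℝ)
    (hφ : ∀ ϑ ∈ Ω, ∫⁻ x, qexp lam ⟪ϑ, F x⟫ ∂ν = ENNReal.ofReal (Real.exp (φ ϑ)))
    (hdiff : ∀ ϑ ∈ Ω, DifferentiableAt ℝ φ ϑ)
    (hInt : ∀ ϑ ∈ Ω,
      Integrable (fun x => ((max (1 + lam * ⟪ϑ, F x⟫) 0) ^ (1 / lam - 1)) • F x) ν)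
    (hDUI : ∀ ϑ ∈ Ω, Real.exp (φ ϑ) • gradient φ ϑ
      = ∫ x, ((max (1 + lam * ⟪ϑ, F x⟫) 0) ^ (1 / lam - 1)) • F x ∂ν) :
    ConvexOn ℝ Ω (fun ϑ => (1 / lam) * (Real.exp (lam * φ ϑ) - 1)) ∧
    ∀ ϑ ∈ Ω, 0 < 1 - lam * ⟪gradient φ ϑ, ϑ⟫ :=
  divisivePotential_cConvex_general ν lam hlam0 hlam1 F hF Ω hconv φ hφ hInt hDUI
end
end

section
/- Fix λ ≠ 0. Let Ω ⊂ ℝ^d be nonempty open convex and let φ : Ω → ℝ be smooth with 1 − λ ∇φ(ϑ)·ϑ > 0 for all ϑ ∈ Ω. Suppose the map τ(ϑ) = ϑ·e^{−λ φ(ϑ)} is injective on Ω. Then τ is a diffeomorphism from Ω onto its range: at every ϑ ∈ Ω its Jacobian matrix ∂τ/∂ϑ = e^{−λφ(ϑ)}·(I_d − λ ϑ (∇φ(ϑ))ᵀ) is invertible, with inverse e^{λφ(ϑ)}·(I_d + λ ϑ (∇φ(ϑ))ᵀ/(1 − λ∇φ(ϑ)·ϑ)), the range τ(Ω) is open, and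 τ⁻¹ is smooth. -/
/-!
The Jacobian of `τ = e^{-λφ} • id` at `ϑ` is `e^{-λφ(ϑ)} (1 - λ ϑ ∇φ(ϑ)ᵀ)`, a scalar multiple of a
rank-one perturbation of the identity, which the Sherman–Morrison formula inverts explicitly as
soon as `1 - λ ∇φ(ϑ)·ϑ ≠ 0`. The inverse function theorem then makes `τ` a local smooth
diffeomorphism at every point of the open set `Ω`, so `τ(Ω)` is open, and injectivity on `Ω`
glues the local inverses into the global inverse `invFunOn τ Ω`, which is therefore smooth.
-/

open Real Function Set Filter Topology
open scoped RealInnerProductSpace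

namespace LinearMap

variable {𝕜 E : Type*} [Field 𝕜] [AddCommGroup E] [Module 𝕜 E] (f : E →ₗ[𝕜] 𝕜) {v : E}
  {b : 𝕜}

theorem shermanMorrison_left_inv (hb : b ≠ 0) (hv : f v ≠ 1) (w : E) :
    b⁻¹ • (b • (w - f w • v) + (f (b • (w - f w • v)) / (1 - f v)) • v) = w := by
  have hv' : 1 - f v ≠ 0 := sub_ne_zero.mpr hv.symm
  have hf : f (b • (w - f w • v)) / (1 - f v) = b * f w := by
    simp only [map_smul, map_sub, smul_eq_mul]; field_simp
  rw [hf, smul_add, inv_smul_smul₀ hb, ← smul_smul, inv_smul_smul₀ hb, sub_add_cancel]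

theorem shermanMorrison_right_inv (hb : b ≠ 0) (hv : f v ≠ 1) (w : E) :
    b • (b⁻¹ • (w + (f w / (1 - f v)) • v) - f (b⁻¹ • (w + (f w / (1 - f v)) • v)) • v) = w := by
  have hv' : 1 - f v ≠ 0 := sub_ne_zero.mpr hv.symm
  have hf : f (b⁻¹ • (w + (f w / (1 - f v)) • v)) = b⁻¹ * (f w / (1 - f v)) := by
    simp only [map_smul, map_add, smul_eq_mul]; field_simp; ring
  rw [hf, smul_sub, smul_inv_smul₀ hb, ← smul_smul, smul_inv_smul₀ hb, add_sub_cancel_right]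

end LinearMap

namespace ContinuousLinearEquiv

variable {𝕜 E : Type*} [NontriviallyNormedField 𝕜] [NormedAddCommGroup E] [NormedSpace 𝕜 E]

def shermanMorrison (f : E →L[𝕜] 𝕜) (v : E) {b : 𝕜} (hb : b ≠ 0) (hv : f v ≠ 1) :
    E ≃L[𝕜] E :=
  equivOfInverse (b • (.id 𝕜 E - f.smulRight v))
    (b⁻¹ • (.id 𝕜 E + ((1 - f v)⁻¹ • f).smulRight v))
    (fun w => by
      change b⁻¹ • (b • (w - f w • v) + ((1 - f v)⁻¹ * f (b • (w - f w • v))) • v) = w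
      rw [← div_eq_inv_mul]
      exact LinearMap.shermanMorrison_left_inv (f : E →ₗ[𝕜] 𝕜) hb hv w)
    (fun w => by
      change b • (b⁻¹ • (w + ((1 - f v)⁻¹ * f w) • v)
        - f (b⁻¹ • (w + ((1 - f v)⁻¹ * f w) • v)) • v) = w
      rw [← div_eq_inv_mul]
      exact LinearMap.shermanMorrison_right_inv (f : E →ₗ[𝕜] 𝕜) hb hv w)

variable (f : E →L[𝕜] 𝕜) (v : E) {b : 𝕜} (hb : b ≠ 0) (hv : f v ≠ 1)

theorem coe_shermanMorrison :
    (shermanMorrison f v hb hv : E →L[𝕜] E) = b • (.id 𝕜 E - f.smulRight v) := rfl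

theorem shermanMorrison_apply (w : E) :
    shermanMorrison f v hb hv w = b • (w - f w • v) := rfl

theorem shermanMorrison_symm_apply (w : E) :
    (shermanMorrison f v hb hv).symm w = b⁻¹ • (w + (f w / (1 - f v)) • v) := by
  rw [div_eq_inv_mul]; rfl

end ContinuousLinearEquiv

theorem HasFDerivAt.exp_neg_mul_smul_id {E : Type*} [NormedAddCommGroup E] [NormedSpace ℝ E]
    {φ : E → ℝ} {φ' : E →L[ℝ] ℝ} {x : E} (c : ℝ) (hφ : HasFDerivAt φ φ' x) :
    HasFDerivAt (fun y => Real.exp (-c * φ y) • y)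
      (Real.exp (-c * φ x) • (ContinuousLinearMap.id ℝ E - (c • φ').smulRight x)) x := by
  refine ((hφ.const_mul (-c)).exp.smul (hasFDerivAt_id x)).congr_fderiv ?_
  ext w
  simp only [add_apply, smul_apply, sub_apply, ContinuousLinearMap.smulRight_apply,
    ContinuousLinearMap.id_apply, smul_eq_mul, id_eq]
  module

section InverseFunction

variable {𝕂 E F : Type*} [RCLike 𝕂] [NormedAddCommGroup E] [NormedSpace 𝕂 E] [CompleteSpace E]
  [NormedAddCommGroup F] [NormedSpace 𝕂 F] {f : E → F} {s : Set E} {n : WithTop ℕ∞}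

theorem ContDiffOn.isOpen_image_of_hasFDerivAt_equiv (hf : ContDiffOn 𝕂 n f s) (hs : IsOpen s)
    (hn : n ≠ 0) (hf' : ∀ x ∈ s, ∃ f' : E ≃L[𝕂] F, HasFDerivAt f (f' : E →L[𝕂] F) x) :
    IsOpen (f '' s) := by
  rw [isOpen_iff_mem_nhds]
  rintro _ ⟨x, hx, rfl⟩
  obtain ⟨f', hf'x⟩ := hf' x hx
  rw [← ((hf.contDiffAt (hs.mem_nhds hx)).hasStrictFDerivAt' hf'x hn).map_nhds_eq_of_equiv]
  exact image_mem_map (hs.mem_nhds hx)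

theorem ContDiffOn.contDiffOn_invFunOn_image_of_hasFDerivAt_equiv (hf : ContDiffOn 𝕂 n f s)
    (hs : IsOpen s) (hn : n ≠ 0)
    (hf' : ∀ x ∈ s, ∃ f' : E ≃L[𝕂] F, HasFDerivAt f (f' : E →L[𝕂] F) x) (hinj : InjOn f s) :
    ContDiffOn 𝕂 n (invFunOn f s) (f '' s) := by
  rintro _ ⟨x, hx, rfl⟩
  obtain ⟨f', hf'x⟩ := hf' x hx
  have hfx : ContDiffAt 𝕂 n f x := hf.contDiffAt (hs.mem_nhds hx)
  set g := hfx.localInverse hf'x hn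
  have hg : ContDiffAt 𝕂 n g (f x) := hfx.to_localInverse hf'x hn
  have hgx : g (f x) = x := hfx.localInverse_apply_image hf'x hn
  have hfg : ∀ᶠ y in 𝓝 (f x), f (g y) = y :=
    (hfx.hasStrictFDerivAt' hf'x hn).eventually_right_inverse
  have hgs : ∀ᶠ y in 𝓝 (f x), g y ∈ s := hg.continuousAt.preimage_mem_nhds <| by
    rw [hgx]
    exact hs.mem_nhds hx
  -- near `f x`, the local inverse lands in `s`, so injectivity identifies it with `invFunOn`
  have heq : invFunOn f s =ᶠ[𝓝 (f x)] g := by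
    filter_upwards [hfg, hgs] with y hy hgy
    have hy' : ∃ a ∈ s, f a = y := ⟨g y, hgy, hy⟩
    exact hinj (invFunOn_mem hy') hgy ((invFunOn_eq hy').trans hy.symm)
  exact (hg.congr_of_eventuallyEq heq).contDiffWithinAt

end InverseFunction

open ContinuousLinearEquiv InnerProductSpace in
theorem parameterChange_diffeomorphism_general {d : ℕ} (lam : ℝ)
    (Ω : Set (EuclideanSpace ℝ (Fin d)))
    (hop : IsOpen Ω)
    (φ : EuclideanSpace ℝ (Fin d) → ℝ) (hφ : ContDiffOn ℝ (⊤ : ℕ∞) φ Ω)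
    (hpos : ∀ ϑ ∈ Ω, 0 < 1 - lam * ⟪gradient φ ϑ, ϑ⟫)
    (τ : EuclideanSpace ℝ (Fin d) → EuclideanSpace ℝ (Fin d))
    (hτ : ∀ ϑ, τ ϑ = Real.exp (-lam * φ ϑ) • ϑ)
    (hinj : Set.InjOn τ Ω) :
    (∀ ϑ ∈ Ω,
      (∀ w : EuclideanSpace ℝ (Fin d),
        fderiv ℝ τ ϑ w = Real.exp (-lam * φ ϑ) • (w - (lam * ⟪gradient φ ϑ, w⟫) • ϑ)) ∧
      (∀ w : EuclideanSpace ℝ (Fin d),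
        Real.exp (lam * φ ϑ) •
            (fderiv ℝ τ ϑ w
              + (lam * ⟪gradient φ ϑ, fderiv ℝ τ ϑ w⟫ / (1 - lam * ⟪gradient φ ϑ, ϑ⟫)) • ϑ)
          = w) ∧
      (∀ w : EuclideanSpace ℝ (Fin d),
        fderiv ℝ τ ϑ (Real.exp (lam * φ ϑ) •
            (w + (lam * ⟪gradient φ ϑ, w⟫ / (1 - lam * ⟪gradient φ ϑ, ϑ⟫)) • ϑ))
          = w)) ∧
    IsOpen (τ '' Ω) ∧
    ∃ g : EuclideanSpace ℝ (Fin d) → EuclideanSpace ℝ (Fin d),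
      ContDiffOn ℝ (⊤ : ℕ∞) g (τ '' Ω) ∧ Set.InvOn g τ Ω (τ '' Ω) := by
  have hτ' : τ = fun y => exp (-lam * φ y) • y := funext hτ
  have hn : ((⊤ : ℕ∞) : WithTop ℕ∞) ≠ 0 := by simp
  have hv : ∀ ϑ ∈ Ω, (lam • toDual ℝ _ (gradient φ ϑ)) ϑ ≠ 1 := fun ϑ hϑ => by
    simp only [_root_.smul_apply, toDual_apply_apply, smul_eq_mul]
    linarith [hpos ϑ hϑ]
  have hJ : ∀ ϑ (hϑ : ϑ ∈ Ω), HasFDerivAt τ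
      (shermanMorrison _ ϑ (exp_ne_zero (-lam * φ ϑ)) (hv ϑ hϑ) : _ →L[ℝ] _) ϑ := by
    intro ϑ hϑ
    rw [coe_shermanMorrison, hτ']
    have hφϑ := (hφ.differentiableOn (by simp)).differentiableAt (hop.mem_nhds hϑ)
    exact HasFDerivAt.exp_neg_mul_smul_id lam (hasGradientAt_iff_hasFDerivAt.mp hφϑ.hasGradientAt)
  have hτs : ContDiffOn ℝ (⊤ : ℕ∞) τ Ω := hτ' ▸ ((contDiffOn_const.mul hφ).exp).smul contDiffOn_id
  have hJ' : ∀ ϑ ∈ Ω, ∃ J : _ ≃L[ℝ] _, HasFDerivAt τ (J : _ →L[ℝ] _) ϑ :=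
    fun ϑ hϑ => ⟨shermanMorrison _ ϑ _ (hv ϑ hϑ), hJ ϑ hϑ⟩
  refine ⟨fun ϑ hϑ => ?_, hτs.isOpen_image_of_hasFDerivAt_equiv hop hn hJ', invFunOn τ Ω,
    hτs.contDiffOn_invFunOn_image_of_hasFDerivAt_equiv hop hn hJ' hinj,
    hinj.bijOn_image.invOn_invFunOn⟩
  have hexp : (exp (-lam * φ ϑ))⁻¹ = exp (lam * φ ϑ) := by rw [neg_mul, exp_neg, inv_inv]
  have hsymm := shermanMorrison_symm_apply _ ϑ (exp_ne_zero (-lam * φ ϑ)) (hv ϑ hϑ)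
  rw [hexp] at hsymm
  rw [(hJ ϑ hϑ).fderiv]
  exact ⟨shermanMorrison_apply _ ϑ (exp_ne_zero _) (hv ϑ hϑ),
    fun w => (hsymm _).symm.trans (symm_apply_apply _ w),
    fun w => (congrArg _ (hsymm w)).symm.trans (apply_symm_apply _ w)⟩

/-- Let `λ ≠ 0`, `Ω` nonempty open convex, `φ` smooth on `Ω` with
`1 − λ∇φ(ϑ)·ϑ > 0`, and suppose `τ(ϑ) = ϑ·e^{−λφ(ϑ)}` is injective on `Ω`. Then `τ` is a
diffeomorphism onto its range: at every `ϑ ∈ Ω` its Jacobian is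
`w ↦ e^{−λφ(ϑ)}(w − λ⟪∇φ(ϑ), w⟫ ϑ)`, which is invertible with inverse
`w ↦ e^{λφ(ϑ)}(w + λ⟪∇φ(ϑ), w⟫/(1 − λ∇φ(ϑ)·ϑ) · ϑ)`; the range `τ(Ω)` is open and the
inverse map is smooth. -/
theorem parameterChange_diffeomorphism {d : ℕ} (lam : ℝ) (hlam : lam ≠ 0)
    (Ω : Set (EuclideanSpace ℝ (Fin d)))
    (hne : Ω.Nonempty) (hop : IsOpen Ω) (hconv : Convex ℝ Ω)
    (φ : EuclideanSpace ℝ (Fin d) → ℝ) (hφ : ContDiffOn ℝ (⊤ : ℕ∞) φ Ω)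
    (hpos : ∀ ϑ ∈ Ω, 0 < 1 - lam * ⟪gradient φ ϑ, ϑ⟫)
    (τ : EuclideanSpace ℝ (Fin d) → EuclideanSpace ℝ (Fin d))
    (hτ : ∀ ϑ, τ ϑ = Real.exp (-lam * φ ϑ) • ϑ)
    (hinj : Set.InjOn τ Ω) :
    (∀ ϑ ∈ Ω,
      (∀ w : EuclideanSpace ℝ (Fin d),
        fderiv ℝ τ ϑ w = Real.exp (-lam * φ ϑ) • (w - (lam * ⟪gradient φ ϑ, w⟫) • ϑ)) ∧
      (∀ w : EuclideanSpace ℝ (Fin d),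
        Real.exp (lam * φ ϑ) •
            (fderiv ℝ τ ϑ w
              + (lam * ⟪gradient φ ϑ, fderiv ℝ τ ϑ w⟫ / (1 - lam * ⟪gradient φ ϑ, ϑ⟫)) • ϑ)
          = w) ∧
      (∀ w : EuclideanSpace ℝ (Fin d),
        fderiv ℝ τ ϑ (Real.exp (lam * φ ϑ) •
            (w + (lam * ⟪gradient φ ϑ, w⟫ / (1 - lam * ⟪gradient φ ϑ, ϑ⟫)) • ϑ))
          = w)) ∧
    IsOpen (τ '' Ω) ∧
    ∃ g : EuclideanSpace ℝ (Fin d) → EuclideanSpace ℝ (Fin d),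
      ContDiffOn ℝ (⊤ : ℕ∞) g (τ '' Ω) ∧ Set.InvOn g τ Ω (τ '' Ω) :=
  parameterChange_diffeomorphism_general lam Ω hop φ hφ hpos τ hτ hinj
end

section
/- Fix λ ≠ 0. Let Ω ⊂ ℝ^d be nonempty open and let φ : Ω → ℝ be smooth with 1 − λ ∇φ(ϑ)·ϑ > 0 on Ω. Suppose the map τ(ϑ) = ϑ·e^{−λ φ(ϑ)} is a diffeomorphism from Ω onto an open set Θ ⊂ ℝ^d, and define ψ : Θ → ℝ by ψ(τ(ϑ)) = (1/(−λ))·(e^{−λ φ(ϑ)} − 1). Then the ordinary gradient of ψ coincides with the λ-gradient of φ: for every ϑ ∈ Ω, ∇ψ(τ(ϑ)) = ∇φ(ϑ)/(1 − λ ∇φ(ϑ)·ϑ) = ∇^{c_λ} φ(ϑ). (In particular, for a λ-exponential family the subtractive potential φ_q and the divisive potential φ_λ define the same dual variable η, the escort expectation.) -/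
open Real Filter Topology
open scoped RealInnerProductSpace

noncomputable section

/-! On `Ω` we have `ψ ∘ τ = (e^{-λφ} - 1) / (-λ)`, whose derivative at `ϑ` is `e^{-λφ(ϑ)} Dφ(ϑ)`,
while `Dτ(ϑ) v = e^{-λφ(ϑ)} (v - λ Dφ(ϑ)(v) ϑ)`. A one-line computation gives
`(1 - λ Dφ(ϑ) ϑ)⁻¹ Dφ(ϑ) ∘ Dτ(ϑ) = e^{-λφ(ϑ)} Dφ(ϑ)`, and since `Dτ(ϑ)` has the right inverse
`Dg(τ ϑ)`, the chain rule identifies `Dψ(τ ϑ)` with `(1 - λ Dφ(ϑ) ϑ)⁻¹ Dφ(ϑ)`. -/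

section RightInverse

variable {𝕜 : Type*} [NontriviallyNormedField 𝕜] {E F G : Type*}
  [NormedAddCommGroup E] [NormedSpace 𝕜 E] [NormedAddCommGroup F] [NormedSpace 𝕜 F]
  [NormedAddCommGroup G] [NormedSpace 𝕜 G]
  {τ : E → F} {g : F → E} {Dτ : E →L[𝕜] F} {Dg : F →L[𝕜] E} {x : E} {y : F}

theorem HasFDerivAt.comp_eq_id_of_rightInverse (hτ : HasFDerivAt τ Dτ x)
    (hg : HasFDerivAt g Dg y) (hgy : g y = x) (hτg : τ ∘ g =ᶠ[𝓝 y] id) :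
    Dτ.comp Dg = ContinuousLinearMap.id 𝕜 F := by
  subst hgy
  exact ((hτ.comp y hg).congr_of_eventuallyEq hτg.symm).unique (hasFDerivAt_id y)

theorem HasFDerivAt.of_comp_rightInverse {ψ : F → G} {L : F →L[𝕜] G}
    (hψτ : HasFDerivAt (ψ ∘ τ) (L.comp Dτ) x) (hτ : HasFDerivAt τ Dτ x)
    (hg : HasFDerivAt g Dg y) (hgy : g y = x) (hτg : τ ∘ g =ᶠ[𝓝 y] id) :
    HasFDerivAt ψ L y := by
  subst hgy
  have hψ : ψ =ᶠ[𝓝 y] (ψ ∘ τ) ∘ g := hτg.mono fun z hz => congrArg ψ hz.symm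
  have h := (hψτ.comp y hg).congr_of_eventuallyEq hψ
  rwa [ContinuousLinearMap.comp_assoc, hτ.comp_eq_id_of_rightInverse hg rfl hτg,
    ContinuousLinearMap.comp_id] at h

end RightInverse

section Deformed

variable {E : Type*} [NormedAddCommGroup E] [NormedSpace ℝ E]
  {φ : E → ℝ} {φ' : E →L[ℝ] ℝ} {x : E} {lam : ℝ}

theorem hasFDerivAt_exp_smul_self (hφ : HasFDerivAt φ φ' x) :
    HasFDerivAt (fun y => exp (-lam * φ y) • y)
      (exp (-lam * φ x) • (ContinuousLinearMap.id ℝ E - lam • φ'.smulRight x)) x := by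
  refine ((hφ.const_mul (-lam)).exp.smul (hasFDerivAt_id x)).congr_fderiv ?_
  ext v
  simp only [smul_apply, sub_apply, add_apply, ContinuousLinearMap.smulRight_apply,
    ContinuousLinearMap.id_apply, id_eq]
  module

theorem hasFDerivAt_one_div_neg_mul_exp_sub_one (hlam : lam ≠ 0) (hφ : HasFDerivAt φ φ' x) :
    HasFDerivAt (fun y => 1 / (-lam) * (exp (-lam * φ y) - 1)) (exp (-lam * φ x) • φ') x := by
  refine (((hφ.const_mul (-lam)).exp.sub_const 1).const_mul (1 / (-lam))).congr_fderiv ?_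
  rw [smul_smul, smul_smul]
  field_simp

theorem inv_smul_comp_fderiv_exp_smul_self (hpos : 1 - lam * φ' x ≠ 0) (c : ℝ) :
    ((1 - lam * φ' x)⁻¹ • φ').comp (c • (ContinuousLinearMap.id ℝ E - lam • φ'.smulRight x)) =
      c • φ' := by
  ext v
  simp only [ContinuousLinearMap.comp_apply, smul_apply, sub_apply,
    ContinuousLinearMap.smulRight_apply, ContinuousLinearMap.id_apply, map_smul, map_sub,
    smul_eq_mul]
  field_simp

end Deformed

theorem subtractive_divisive_same_dual_general {d : ℕ} (lam : ℝ) (hlam : lam ≠ 0)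
    (Ω : Set (EuclideanSpace ℝ (Fin d))) (hop : IsOpen Ω)
    (φ : EuclideanSpace ℝ (Fin d) → ℝ) (hφ : ContDiffOn ℝ (⊤ : ℕ∞) φ Ω)
    (hpos : ∀ ϑ ∈ Ω, 0 < 1 - lam * ⟪gradient φ ϑ, ϑ⟫)
    (τ : EuclideanSpace ℝ (Fin d) → EuclideanSpace ℝ (Fin d))
    (hτ : ∀ ϑ, τ ϑ = Real.exp (-lam * φ ϑ) • ϑ)
    (Θ : Set (EuclideanSpace ℝ (Fin d))) (hΘ : IsOpen Θ) (hrange : τ '' Ω = Θ)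
    (g : EuclideanSpace ℝ (Fin d) → EuclideanSpace ℝ (Fin d))
    (hg : ContDiffOn ℝ (⊤ : ℕ∞) g Θ) (hinv : Set.InvOn g τ Ω Θ)
    (ψ : EuclideanSpace ℝ (Fin d) → ℝ)
    (hψ : ∀ ϑ ∈ Ω, ψ (τ ϑ) = (1 / (-lam)) * (Real.exp (-lam * φ ϑ) - 1)) :
    ∀ ϑ ∈ Ω,
      gradient ψ (τ ϑ) = (1 - lam * ⟪gradient φ ϑ, ϑ⟫)⁻¹ • gradient φ ϑ := by
  intro ϑ hϑ
  have hτϑ : τ ϑ ∈ Θ := hrange ▸ Set.mem_image_of_mem τ hϑ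
  have hgτ : g (τ ϑ) = ϑ := hinv.1 hϑ
  have hφd := ((hφ.contDiffAt (hop.mem_nhds hϑ)).differentiableAt (by simp)).hasFDerivAt
  have hgd := ((hg.contDiffAt (hΘ.mem_nhds hτϑ)).differentiableAt (by simp)).hasFDerivAt
  have hτd : HasFDerivAt τ _ ϑ := funext hτ ▸ hasFDerivAt_exp_smul_self (lam := lam) hφd
  have hψτ : ψ ∘ τ =ᶠ[𝓝 ϑ] fun y => 1 / (-lam) * (exp (-lam * φ y) - 1) :=
    eventually_of_mem (hop.mem_nhds hϑ) hψ
  have hτg : τ ∘ g =ᶠ[𝓝 (τ ϑ)] id := eventually_of_mem (hΘ.mem_nhds hτϑ) hinv.2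
  have hposϑ := hpos ϑ hϑ
  rw [inner_gradient_left] at hposϑ ⊢
  refine (hasGradientAt_iff_hasFDerivAt.2 ?_).gradient
  rw [map_smul, gradient, LinearIsometryEquiv.apply_symm_apply]
  refine HasFDerivAt.of_comp_rightInverse ?_ hτd hgd hgτ hτg
  rw [inv_smul_comp_fderiv_exp_smul_self hposϑ.ne']
  exact (hasFDerivAt_one_div_neg_mul_exp_sub_one hlam hφd).congr_of_eventuallyEq hψτ

/-- Let `λ ≠ 0`, `Ω` nonempty open, `φ` smooth with `1 − λ∇φ(ϑ)·ϑ > 0` on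
`Ω`, and suppose `τ(ϑ) = ϑ·e^{−λφ(ϑ)}` is a diffeomorphism from `Ω` onto an open set `Θ`.
Define `ψ` on `Θ` by `ψ(τ(ϑ)) = (1/(−λ))(e^{−λφ(ϑ)} − 1)`. Then the ordinary gradient of `ψ`
coincides with the λ-gradient of `φ`: `∇ψ(τ(ϑ)) = ∇φ(ϑ)/(1 − λ∇φ(ϑ)·ϑ)` for all `ϑ ∈ Ω`. -/
theorem subtractive_divisive_same_dual {d : ℕ} (lam : ℝ) (hlam : lam ≠ 0)
    (Ω : Set (EuclideanSpace ℝ (Fin d))) (hne : Ω.Nonempty) (hop : IsOpen Ω)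
    (φ : EuclideanSpace ℝ (Fin d) → ℝ) (hφ : ContDiffOn ℝ (⊤ : ℕ∞) φ Ω)
    (hpos : ∀ ϑ ∈ Ω, 0 < 1 - lam * ⟪gradient φ ϑ, ϑ⟫)
    (τ : EuclideanSpace ℝ (Fin d) → EuclideanSpace ℝ (Fin d))
    (hτ : ∀ ϑ, τ ϑ = Real.exp (-lam * φ ϑ) • ϑ)
    (Θ : Set (EuclideanSpace ℝ (Fin d))) (hΘ : IsOpen Θ) (hrange : τ '' Ω = Θ)
    (g : EuclideanSpace ℝ (Fin d) → EuclideanSpace ℝ (Fin d))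
    (hg : ContDiffOn ℝ (⊤ : ℕ∞) g Θ) (hinv : Set.InvOn g τ Ω Θ)
    (ψ : EuclideanSpace ℝ (Fin d) → ℝ)
    (hψ : ∀ ϑ ∈ Ω, ψ (τ ϑ) = (1 / (-lam)) * (Real.exp (-lam * φ ϑ) - 1)) :
    ∀ ϑ ∈ Ω,
      gradient ψ (τ ϑ) = (1 - lam * ⟪gradient φ ϑ, ϑ⟫)⁻¹ • gradient φ ϑ :=
  subtractive_divisive_same_dual_general lam hlam Ω hop φ hφ hpos τ hτ Θ hΘ hrange g hg hinv ψ hψ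
end
end
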